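/- arXiv:2208.13913 — 4 statements merged into one kernel-verified Lean document; each statement's English description precedes it below -/
import Mathlib

section
/- Fix a prime p and an integer n ≥ 1. The set of all pairs (Ω, η), where Ω ⊆ ℤ^n and η ⊆ ℤ^n × ℕ, for which there exist an abelian p-group M and a tuple (a_1, …, a_n) ∈ M^n with Ω = { (z_1, …, z_n) ∈ ℤ^n : z_1 a_1 + ⋯ + z_n a_n = 0 } and η = { ((z_1, …, z_n), k) ∈ ℤ^n × ℕ : z_1 a_1 + ⋯ + z_n a_n ∈ p^k M }, is countable. (Equivalently: for every n ≥ 1, the set of complete p-torsion pp-types in n free variables consistent with the theory of abelian groups is countable.) -/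
open DirectSum

/-- The Prüfer `p`-group, realized as the `p`-primary subgroup of `ℚ/ℤ`. -/
def Prufer (p : ℕ) : AddSubgroup (AddCircle (1 : ℚ)) where
  carrier := {x | ∃ n : ℕ, p ^ n • x = 0}
  zero_mem' := ⟨0, smul_zero _⟩
  add_mem' := by
    rintro a b ⟨n, hn⟩ ⟨m, hm⟩
    refine ⟨n + m, ?_⟩
    have ha : p ^ (n + m) • a = 0 := by
      rw [add_comm, pow_add, mul_smul, hn, smul_zero]
    have hb : p ^ (n + m) • b = 0 := by
      rw [pow_add, mul_smul, hm, smul_zero]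
    rw [smul_add, ha, hb, add_zero]
  neg_mem' := by
    rintro a ⟨n, hn⟩
    exact ⟨n, by rw [smul_neg, hn, neg_zero]⟩

/-- `⊕_{n=1}^∞ ℤ(p^n)^{(ℵ₀)} ⊕ ℤ(p^∞)^{(ℵ₀)}`. -/
abbrev UPGroup (p : ℕ) : Type :=
  (⨁ nk : ℕ × ℕ, ZMod (p ^ (nk.1 + 1))) × (⨁ _k : ℕ, Prufer p)

/-- `f` is a pure monomorphism: injective, and divisibility of `f m` in the codomain
implies divisibility of `m` in the domain. -/
def IsPureMono {M N : Type} [AddCommGroup M] [AddCommGroup N] (f : M →+ N) : Prop :=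
  Function.Injective f ∧
    ∀ (n : ℤ) (m : M), (∃ x : N, n • x = f m) → ∃ y : M, n • y = m

/-- `N` is pure injective: every pure monomorphism out of `N` has a retraction. -/
def IsPureInjective (N : Type) [AddCommGroup N] : Prop :=
  ∀ (K : Type) [AddCommGroup K] (g : N →+ K), IsPureMono g →
    ∃ h : K →+ N, h.comp g = AddMonoidHom.id N

/-- `h` is an essential pure monomorphism. -/
def IsEssentialPureMono {M L : Type} [AddCommGroup M] [AddCommGroup L] (h : M →+ L) : Prop :=
  IsPureMono h ∧
    ∀ (K : Type) [AddCommGroup K] (g : L →+ K),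
      IsPureMono (g.comp h) → IsPureMono g

/-- The subgroup `D` is divisible. -/
def DivisibleSub {G : Type} [AddCommGroup G] (D : AddSubgroup G) : Prop :=
  ∀ (n : ℤ), n ≠ 0 → ∀ x ∈ D, ∃ y ∈ D, n • y = x

/-- The largest divisible subgroup of `G`. -/
def maxDivisible (G : Type) [AddCommGroup G] : AddSubgroup G :=
  sSup {D : AddSubgroup G | DivisibleSub D}

/-- `H` together with `ι : B → H` is a pure injective hull of the `p`-group `M`
over the subgroup `B`. -/
structure IsPureInjHullOver (p : ℕ) (M : Type) [AddCommGroup M] (B : AddSubgroup M)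
    (H : Type) [AddCommGroup H] (ι : B →+ H) : Prop where
  inj : Function.Injective ι
  pureInjective : IsPureInjective H
  div_iff : ∀ (b : B) (k : ℕ),
    (∃ x : H, p ^ k • x = ι b) ↔ ∃ m : M, p ^ k • m = (b : M)
  extends_hom : ∀ (N : Type) [AddCommGroup N], IsPureInjective N →
    ∀ g₀ : B →+ N,
      (∀ (b : B) (k : ℕ), (∃ m : M, p ^ k • m = (b : M)) → ∃ x : N, p ^ k • x = g₀ b) →
      ∃ g : H →+ N, ∀ b : B, g (ι b) = g₀ b
  endo_bijective : ∀ g : H →+ H, (∀ b : B, g (ι b) = ι b) → Function.Bijective g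

/-- `f₀ : B ≃+ B'` is a partial pure isomorphism: it preserves, in both directions,
divisibility by powers of `p` computed in the ambient group `M`. -/
def IsPartialPureIso (p : ℕ) {M : Type} [AddCommGroup M] {B B' : AddSubgroup M}
    (f₀ : B ≃+ B') : Prop :=
  ∀ (b : B) (k : ℕ), (∃ x : M, p ^ k • x = (b : M)) ↔ ∃ x : M, p ^ k • x = ((f₀ b : B') : M)

/-- `M` is ℵ₀-strongly homogeneous: every partial pure isomorphism between finite
subgroups of `M` extends to an automorphism of `M`. -/
def Aleph0StronglyHomogeneous (p : ℕ) (M : Type) [AddCommGroup M] : Prop :=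
  ∀ (B B' : AddSubgroup M), Finite B → Finite B' →
    ∀ f₀ : B ≃+ B', IsPartialPureIso p f₀ →
      ∃ f : M ≃+ M, ∀ b : B, f (b : M) = ((f₀ b : B') : M)

/-- The subgroup `n M` of `M`. -/
def smulSub (n : ℕ) (M : Type) [AddCommGroup M] : AddSubgroup M where
  carrier := {x | ∃ y : M, n • y = x}
  zero_mem' := ⟨0, smul_zero n⟩
  add_mem' := by
    rintro a b ⟨y, hy⟩ ⟨z, hz⟩
    exact ⟨y + z, by rw [smul_add, hy, hz]⟩
  neg_mem' := by
    rintro a ⟨y, hy⟩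
    exact ⟨-y, by rw [smul_neg, hy]⟩

/-- `p^ω M = ⋂_k p^k M`. -/
def pOmega (p : ℕ) (M : Type) [AddCommGroup M] : AddSubgroup M :=
  ⨅ k : ℕ, smulSub (p ^ k) M

/-- `p^{ω+n} M = p^n (p^ω M)`. -/
def pOmegaPlus (p n : ℕ) (M : Type) [AddCommGroup M] : AddSubgroup M :=
  (pOmega p M).map (DistribMulAction.toAddMonoidHom M ((p : ℕ) ^ n))

/-- `p^α M` for an ordinal `α`, by transfinite recursion. -/
noncomputable def pPow (p : ℕ) (M : Type) [AddCommGroup M] (α : Ordinal.{0}) : AddSubgroup M :=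
  Ordinal.limitRecOn α ⊤
    (fun _ ih => ih.map (DistribMulAction.toAddMonoidHom M (p : ℕ)))
    (fun o _ ih => ⨅ β : {β : Ordinal.{0} // β < o}, ih β.1 β.2)

/-- `a` and `b` have the same Ulm sequence in `M`. -/
def SameUlmSeq (p : ℕ) {M : Type} [AddCommGroup M] (a b : M) : Prop :=
  ∀ (α : Ordinal.{0}) (k : ℕ), p ^ k • a ∈ pPow p M α ↔ p ^ k • b ∈ pPow p M α

/-- `M` is a transitive `p`-group. -/
def IsTransitivePGroup (p : ℕ) (M : Type) [AddCommGroup M] : Prop :=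
  ∀ a b : M, SameUlmSeq p a b → ∃ f : M ≃+ M, f a = b

/-- Either a finite cyclic group `ℤ(p^{n+1})` or the Prüfer group `ℤ(p^∞)`. -/
def CyclicOrPrufer (p : ℕ) : Option ℕ → Type
  | some n => ZMod (p ^ (n + 1))
  | none => Prufer p

instance (p : ℕ) : (o : Option ℕ) → AddCommGroup (CyclicOrPrufer p o)
  | some n => inferInstanceAs (AddCommGroup (ZMod (p ^ (n + 1))))
  | none => inferInstanceAs (AddCommGroup (Prufer p))

/-- Componentwise reduction of an integer vector mod `p ^ m`. -/
def ppRed (p n m : ℕ) (hp : 0 < p) (z : Fin n → ℤ) : Fin n → Fin (p ^ m) :=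
  fun i =>
    ⟨(z i % (p ^ m : ℕ)).toNat, by
      have h1 : (0 : ℤ) < ((p ^ m : ℕ) : ℤ) := by exact_mod_cast pow_pos hp m
      have h2 := Int.emod_lt_of_pos (z i) h1
      have h3 := Int.emod_nonneg (z i) (ne_of_gt h1)
      omega⟩

/-- Lift a reduced vector back to `ℤ`. -/
def ppLift (p n m : ℕ) (v : Fin n → Fin (p ^ m)) : Fin n → ℤ :=
  fun i => ((v i : ℕ) : ℤ)

/-- Decoding map for pp-types of `p`-torsion tuples. -/
def ppDecode (p n : ℕ) (hp : 0 < p)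
    (c : Σ m : ℕ, ((Fin n → Fin (p ^ m)) → Bool × Option ℕ)) :
    Set (Fin n → ℤ) × Set ((Fin n → ℤ) × ℕ) :=
  ({z | (c.2 (ppRed p n c.1 hp z)).1 = true},
   {zk | ∀ K, (c.2 (ppRed p n c.1 hp zk.1)).2 = some K → zk.2 < K})

/-- the set of complete `p`-torsion pp-types in `n` free variables consistent
with the theory of abelian groups is countable, coded by pairs `(Ω, η)`. -/
theorem statement2 (p : ℕ) (hp : p.Prime) (n : ℕ) (hn : 1 ≤ n) :
    Set.Countable {Ωη : Set (Fin n → ℤ) × Set ((Fin n → ℤ) × ℕ) |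
      ∃ (M : Type) (_ : AddCommGroup M),
        (∀ x : M, ∃ k : ℕ, p ^ k • x = 0) ∧
        ∃ a : Fin n → M,
          Ωη.1 = {z : Fin n → ℤ | ∑ i : Fin n, z i • a i = 0} ∧
          Ωη.2 = {zk : (Fin n → ℤ) × ℕ |
            ∃ m : M, p ^ zk.2 • m = ∑ i : Fin n, zk.1 i • a i}} := by
  classical
  have hp0 : 0 < p := hp.pos
  refine Set.Countable.mono ?_ (Set.countable_range (ppDecode p n hp0))
  rintro ⟨Ω, η⟩ ⟨M, _, hM, a, hΩ, hη⟩
  simp only at hΩ hη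
  choose ord hord using hM
  set m : ℕ := Finset.univ.sup (fun i => ord (a i)) with hmdef
  have hm : ∀ i, (p ^ m : ℕ) • a i = 0 := by
    intro i
    have hle : ord (a i) ≤ m := Finset.le_sup (f := fun i => ord (a i)) (Finset.mem_univ i)
    calc p ^ m • a i = p ^ (m - ord (a i)) • (p ^ ord (a i) • a i) := by
          rw [← mul_smul, ← pow_add, Nat.sub_add_cancel hle]
      _ = 0 := by rw [hord, smul_zero]
  -- the key invariance: the linear combination only depends on `z` mod `p ^ m`
  have key : ∀ z : Fin n → ℤ,
      ∑ i, z i • a i = ∑ i, (ppLift p n m (ppRed p n m hp0 z)) i • a i := by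
    intro z
    refine Finset.sum_congr rfl fun i _ => ?_
    have hpos : (0 : ℤ) < ((p ^ m : ℕ) : ℤ) := by exact_mod_cast pow_pos hp0 m
    have hv : (ppLift p n m (ppRed p n m hp0 z)) i = z i % ((p ^ m : ℕ) : ℤ) := by
      simp only [ppLift, ppRed]
      exact Int.toNat_of_nonneg (Int.emod_nonneg _ (ne_of_gt hpos))
    rw [hv]
    conv_lhs => rw [show z i = ((p ^ m : ℕ) : ℤ) * (z i / ((p ^ m : ℕ) : ℤ))
      + z i % ((p ^ m : ℕ) : ℤ) from (Int.mul_ediv_add_emod _ _).symm]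
    rw [add_smul]
    have h0 : (((p ^ m : ℕ) : ℤ) * (z i / ((p ^ m : ℕ) : ℤ))) • a i = 0 := by
      rw [mul_comm, mul_smul, natCast_zsmul, hm, smul_zero]
    rw [h0, zero_add]
  have hηiff : ∀ (z : Fin n → ℤ) (k : ℕ),
      ((z, k) ∈ η ↔ (ppLift p n m (ppRed p n m hp0 z), k) ∈ η) := by
    intro z k
    rw [hη]
    simp only [Set.mem_setOf_eq]
    rw [key z]
  have down : ∀ (v : Fin n → ℤ) (j k : ℕ), j ≤ k → (v, k) ∈ η → (v, j) ∈ η := by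
    intro v j k hjk hv
    rw [hη] at hv ⊢
    obtain ⟨x, hx⟩ := hv
    refine ⟨p ^ (k - j) • x, ?_⟩
    rw [← mul_smul, ← pow_add, show j + (k - j) = k by omega]
    exact hx
  refine ⟨⟨m, fun v =>
    (if ppLift p n m v ∈ Ω then true else false,
     if h : ∀ k, ((ppLift p n m v), k) ∈ η then none
     else some (Nat.find (not_forall.mp h)))⟩, ?_⟩
  unfold ppDecode
  refine Prod.ext ?_ ?_
  · simp only
    ext z
    simp only [Set.mem_setOf_eq]
    have hiff : ppLift p n m (ppRed p n m hp0 z) ∈ Ω ↔ z ∈ Ω := by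
      rw [hΩ]
      simp only [Set.mem_setOf_eq]
      rw [← key z]
    have hb : ∀ c : Prop, (if c then true else false) = true ↔ c := by
      intro c; by_cases hc : c <;> simp [hc]
    rw [hb]
    exact hiff
  · simp only
    ext ⟨z, k⟩
    simp only [Set.mem_setOf_eq]
    set w : Fin n → ℤ := ppLift p n m (ppRed p n m hp0 z) with hw
    by_cases h : ∀ k, (w, k) ∈ η
    · simp only [dif_pos h]
      constructor
      · intro _
        exact (hηiff z k).mpr (h k)
      · intro _ K hK
        exact absurd hK (by simp)
    · simp only [dif_neg h]
      have hspec : (w, Nat.find (not_forall.mp h)) ∉ η := Nat.find_spec (not_forall.mp h)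
      constructor
      · intro hcond
        have hk : k < Nat.find (not_forall.mp h) := hcond _ rfl
        have : (w, k) ∈ η := by
          by_contra hc
          have hle : Nat.find (not_forall.mp h) ≤ k := Nat.find_le hc
          omega
        exact (hηiff z k).mpr this
      · intro hzk K hK
        have hwk : (w, k) ∈ η := (hηiff z k).mp hzk
        obtain rfl : Nat.find (not_forall.mp h) = K := Option.some_injective _ hK
        
        by_contra hlt
        push_neg at hlt
        exact hspec (down w _ k hlt hwk)
end

section
/- Let p be a prime, M a p-group, B a finite subgroup of M, and let s be the least natural number such that B ∩ p^t M = B ∩ p^s M for all natural numbers t ≥ s. If H is a pure injective hull of M over B, then for every t ≥ s the cyclic group ℤ(p^{t+1}) does not occur as a direct summand of H, i.e., there is no direct sum decomposition H = C ⊕ H' with C isomorphic to ℤ(p^{t+1}). -/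
open DirectSum

/-! ### Auxiliary lemmas for statement3 -/

theorem mem_smulSub {n : ℕ} {M : Type} [AddCommGroup M] {x : M} :
    x ∈ smulSub n M ↔ ∃ y : M, n • y = x := Iff.rfl


theorem mem_of_mk'_eq_zero {K : Type} [AddCommGroup K] {N : AddSubgroup K} {x : K}
    (h : QuotientAddGroup.mk' N x = 0) : x ∈ N := by
  rw [← QuotientAddGroup.ker_mk' N]
  exact AddMonoidHom.mem_ker.mpr h

theorem mk'_eq_zero_of_mem {K : Type} [AddCommGroup K] {N : AddSubgroup K} {x : K}
    (h : x ∈ N) : QuotientAddGroup.mk' N x = 0 := by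
  have h2 : x ∈ (QuotientAddGroup.mk' N).ker := by
    rw [QuotientAddGroup.ker_mk' N]
    exact h
  exact AddMonoidHom.mem_ker.mp h2

theorem isPureMono_comp_equiv {A B K : Type} [AddCommGroup A] [AddCommGroup B] [AddCommGroup K]
    {g : B →+ K} (hg : IsPureMono g) (e : A ≃+ B) : IsPureMono (g.comp e.toAddMonoidHom) := by
  constructor
  · exact hg.1.comp e.injective
  · rintro n m ⟨x, hx⟩
    obtain ⟨y, hy⟩ := hg.2 n (e m) ⟨x, hx⟩
    refine ⟨e.symm y, ?_⟩
    have h2 := congrArg e.symm hy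
    simpa using h2

theorem isPureInjective_congr {A B : Type} [AddCommGroup A] [AddCommGroup B] (e : A ≃+ B)
    (hA : IsPureInjective A) : IsPureInjective B := by
  intro K _ g hg
  obtain ⟨h, hh⟩ := hA K (g.comp e.toAddMonoidHom) (isPureMono_comp_equiv hg e)
  refine ⟨e.toAddMonoidHom.comp h, ?_⟩
  ext b
  have h1 := DFunLike.congr_fun hh (e.symm b)
  simp only [AddMonoidHom.coe_comp, Function.comp_apply, AddMonoidHom.id_apply,
    AddEquiv.coe_toAddMonoidHom, e.apply_symm_apply] at h1
  show e (h (g b)) = b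
  rw [h1, e.apply_symm_apply]

theorem isPureInjective_prod {A B : Type} [AddCommGroup A] [AddCommGroup B]
    (hA : IsPureInjective A) (hB : IsPureInjective B) : IsPureInjective (A × B) := by
  intro K _ g hg
  set SB := (g.comp (AddMonoidHom.inr A B)).range with hSB
  set SA := (g.comp (AddMonoidHom.inl A B)).range with hSA
  set qB := QuotientAddGroup.mk' SB with hqB
  set qA := QuotientAddGroup.mk' SA with hqA
  have hgA : IsPureMono (qB.comp (g.comp (AddMonoidHom.inl A B))) := by
    constructor
    · rw [injective_iff_map_eq_zero]
      intro a ha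
      simp only [AddMonoidHom.coe_comp, Function.comp_apply, AddMonoidHom.inl_apply,
        QuotientAddGroup.mk'_apply] at ha
      obtain ⟨b, hb⟩ := mem_of_mk'_eq_zero ha
      simp only [AddMonoidHom.coe_comp, Function.comp_apply, AddMonoidHom.inr_apply] at hb
      have := hg.1 hb
      exact (Prod.mk.injEq _ _ _ _).mp this.symm |>.1
    · rintro n a ⟨z, hz⟩
      obtain ⟨k, rfl⟩ := QuotientAddGroup.mk'_surjective SB z
      have h0 : qB (n • k - g (a, 0)) = 0 := by
        simp only [map_sub, map_zsmul]
        rw [hz]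
        simp [qB]
      obtain ⟨b, hb⟩ := mem_of_mk'_eq_zero h0
      simp only [AddMonoidHom.coe_comp, Function.comp_apply, AddMonoidHom.inr_apply] at hb
      have hk : n • k = g (a, b) := by
        have : (a, b) = (a, 0) + (0, b) := by simp
        rw [this, map_add, hb]
        abel
      obtain ⟨⟨a', b'⟩, hab⟩ := hg.2 n (a, b) ⟨k, hk⟩
      exact ⟨a', congrArg Prod.fst hab⟩
  have hgB : IsPureMono (qA.comp (g.comp (AddMonoidHom.inr A B))) := by
    constructor
    · rw [injective_iff_map_eq_zero]
      intro b hb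
      simp only [AddMonoidHom.coe_comp, Function.comp_apply, AddMonoidHom.inr_apply,
        QuotientAddGroup.mk'_apply] at hb
      obtain ⟨a, ha⟩ := mem_of_mk'_eq_zero hb
      simp only [AddMonoidHom.coe_comp, Function.comp_apply, AddMonoidHom.inl_apply] at ha
      have := hg.1 ha
      exact (Prod.mk.injEq _ _ _ _).mp this.symm |>.2
    · rintro n b ⟨z, hz⟩
      obtain ⟨k, rfl⟩ := QuotientAddGroup.mk'_surjective SA z
      have h0 : qA (n • k - g (0, b)) = 0 := by
        simp only [map_sub, map_zsmul]
        rw [hz]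
        simp [qA]
      obtain ⟨a, ha⟩ := mem_of_mk'_eq_zero h0
      simp only [AddMonoidHom.coe_comp, Function.comp_apply, AddMonoidHom.inl_apply] at ha
      have hk : n • k = g (a, b) := by
        have : (a, b) = (a, 0) + (0, b) := by simp
        rw [this, map_add, ha]
        abel
      obtain ⟨⟨a', b'⟩, hab⟩ := hg.2 n (a, b) ⟨k, hk⟩
      exact ⟨b', congrArg Prod.snd hab⟩
  obtain ⟨rA, hrA⟩ := hA (K ⧸ SB) (qB.comp (g.comp (AddMonoidHom.inl A B))) hgA
  obtain ⟨rB, hrB⟩ := hB (K ⧸ SA) (qA.comp (g.comp (AddMonoidHom.inr A B))) hgB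
  refine ⟨(rA.comp qB).prod (rB.comp qA), AddMonoidHom.ext fun x => ?_⟩
  have e1 : qB (g x) = qB (g (x.1, 0)) := by
    have h0 : g x - g (x.1, 0) ∈ SB := by
      refine ⟨x.2, ?_⟩
      simp only [AddMonoidHom.coe_comp, Function.comp_apply, AddMonoidHom.inr_apply]
      rw [← map_sub]
      congr 1
      exact Prod.ext (by simp) (by simp)
    have h1 : qB (g x - g (x.1, 0)) = 0 := mk'_eq_zero_of_mem h0
    rw [map_sub] at h1
    exact sub_eq_zero.mp h1
  have e2 : qA (g x) = qA (g (0, x.2)) := by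
    have h0 : g x - g (0, x.2) ∈ SA := by
      refine ⟨x.1, ?_⟩
      simp only [AddMonoidHom.coe_comp, Function.comp_apply, AddMonoidHom.inl_apply]
      rw [← map_sub]
      congr 1
      exact Prod.ext (by simp) (by simp)
    have h1 : qA (g x - g (0, x.2)) = 0 := mk'_eq_zero_of_mem h0
    rw [map_sub] at h1
    exact sub_eq_zero.mp h1
  have hA1 := DFunLike.congr_fun hrA x.1
  have hB1 := DFunLike.congr_fun hrB x.2
  simp only [AddMonoidHom.coe_comp, Function.comp_apply, AddMonoidHom.inl_apply,
    AddMonoidHom.inr_apply, AddMonoidHom.id_apply] at hA1 hB1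
  show ((rA.comp qB).prod (rB.comp qA)) (g x) = x
  simp only [AddMonoidHom.prod_apply, AddMonoidHom.coe_comp, Function.comp_apply]
  rw [e1, e2, hA1, hB1]

theorem exists_projections {H : Type} [AddCommGroup H] {C D : AddSubgroup H} (h : IsCompl C D) :
    ∃ (πC : H →+ ↥C) (πD : H →+ ↥D),
      (∀ x : H, ((πC x : H) + (πD x : H) = x)) ∧ (∀ c : ↥C, πC (c : H) = c) ∧
      (∀ d : ↥D, πC (d : H) = 0) ∧ (∀ c : ↥C, πD (c : H) = 0) ∧ (∀ d : ↥D, πD (d : H) = d) := by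
  have h' : IsCompl (AddSubgroup.toIntSubmodule C) (AddSubgroup.toIntSubmodule D) :=
    OrderIso.isCompl AddSubgroup.toIntSubmodule h
  let pC := (AddSubgroup.toIntSubmodule C).linearProjOfIsCompl _ h'
  let pD := (AddSubgroup.toIntSubmodule D).linearProjOfIsCompl _ h'.symm
  let convC : ↥(AddSubgroup.toIntSubmodule C) →+ ↥C :=
    AddMonoidHom.mk' (fun x => ⟨x.1, x.2⟩) (fun _ _ => rfl)
  let convD : ↥(AddSubgroup.toIntSubmodule D) →+ ↥D :=
    AddMonoidHom.mk' (fun x => ⟨x.1, x.2⟩) (fun _ _ => rfl)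
  refine ⟨convC.comp pC.toAddMonoidHom, convD.comp pD.toAddMonoidHom, ?_, ?_, ?_, ?_, ?_⟩
  · intro x
    exact Submodule.projection_add_projection_eq_self h' x
  · intro c
    have := Submodule.linearProjOfIsCompl_apply_left h' (⟨c.1, c.2⟩ : ↥(AddSubgroup.toIntSubmodule C))
    simp only [AddMonoidHom.coe_comp, Function.comp_apply, LinearMap.toAddMonoidHom_coe]
    apply Subtype.ext
    exact congrArg Subtype.val this
  · intro d
    have := Submodule.linearProjOfIsCompl_apply_right h' (⟨d.1, d.2⟩ : ↥(AddSubgroup.toIntSubmodule D))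
    simp only [AddMonoidHom.coe_comp, Function.comp_apply, LinearMap.toAddMonoidHom_coe]
    apply Subtype.ext
    exact congrArg Subtype.val this
  · intro c
    have := Submodule.linearProjOfIsCompl_apply_right h'.symm (⟨c.1, c.2⟩ : ↥(AddSubgroup.toIntSubmodule C))
    simp only [AddMonoidHom.coe_comp, Function.comp_apply, LinearMap.toAddMonoidHom_coe]
    apply Subtype.ext
    exact congrArg Subtype.val this
  · intro d
    have := Submodule.linearProjOfIsCompl_apply_left h'.symm (⟨d.1, d.2⟩ : ↥(AddSubgroup.toIntSubmodule D))
    simp only [AddMonoidHom.coe_comp, Function.comp_apply, LinearMap.toAddMonoidHom_coe]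
    apply Subtype.ext
    exact congrArg Subtype.val this

theorem isPureInjective_summand {H : Type} [AddCommGroup H] (hH : IsPureInjective H)
    {C D : AddSubgroup H} (h : IsCompl C D) : IsPureInjective ↥D := by
  obtain ⟨πC, πD, hsum, hCl, hCr, hDl, hDr⟩ := exists_projections h
  intro K _ g hg
  let G : H →+ ↥C × K := πC.prod (g.comp πD)
  have hG : IsPureMono G := by
    constructor
    · intro x y hxy
      have h1 : πC x = πC y := congrArg Prod.fst hxy
      have h2 : g (πD x) = g (πD y) := congrArg Prod.snd hxy
      have h3 : πD x = πD y := hg.1 h2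
      rw [← hsum x, ← hsum y, h1, h3]
    · rintro n x ⟨⟨c, k⟩, hck⟩
      have h1 : n • c = πC x := congrArg Prod.fst hck
      have h2 : n • k = g (πD x) := congrArg Prod.snd hck
      obtain ⟨y, hy⟩ := hg.2 n (πD x) ⟨k, h2⟩
      refine ⟨(c : H) + (y : H), ?_⟩
      rw [smul_add]
      have e1 : n • (c : H) = ((n • c : ↥C) : H) := rfl
      have e2 : n • (y : H) = ((n • y : ↥D) : H) := rfl
      rw [e1, e2, h1, hy, hsum x]
  obtain ⟨r, hr⟩ := hH (↥C × K) G hG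
  refine ⟨πD.comp (r.comp (AddMonoidHom.inr ↥C K)), AddMonoidHom.ext fun d => ?_⟩
  have h1 : G (d : H) = (0, g d) := by
    simp only [G, AddMonoidHom.prod_apply, AddMonoidHom.coe_comp, Function.comp_apply]
    rw [hCr d, hDr d]
  have h2 : r (0, g d) = (d : H) := by
    rw [← h1]
    exact DFunLike.congr_fun hr (d : H)
  simp only [AddMonoidHom.coe_comp, Function.comp_apply, AddMonoidHom.inr_apply,
    AddMonoidHom.id_apply]
  rw [h2, hDr d]

theorem retraction_of_fg {N T : Type} [AddCommGroup N] [AddCommGroup T] [AddGroup.FG T]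
    (g : N →+ T) (hg : IsPureMono g) : ∃ r : T →+ N, ∀ x : N, r (g x) = x := by
  classical
  set R := g.range with hR
  set qm := QuotientAddGroup.mk' R with hqm
  obtain ⟨n, ι, hι, pp, hpp, ee, ⟨eQ⟩⟩ := AddCommGroup.equiv_free_prod_directSum_zmod (T ⧸ R)
  haveI : DecidableEq ι := Classical.decEq ι
  choose u hu using fun i : Fin n => QuotientAddGroup.mk'_surjective R (eQ.symm (Finsupp.single i 1, 0))
  have tors : ∀ i : ι, ∃ v : T,
      qm v = eQ.symm (0, DirectSum.of (fun j => ZMod (pp j ^ ee j)) i 1) ∧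
      ((pp i ^ ee i : ℕ) : ℤ) • v = 0 := by
    intro i
    obtain ⟨w, hw⟩ := QuotientAddGroup.mk'_surjective R
      (eQ.symm (0, DirectSum.of (fun j => ZMod (pp j ^ ee j)) i 1))
    have hq0 : qm (((pp i ^ ee i : ℕ) : ℤ) • w) = 0 := by
      rw [map_zsmul, hw, ← map_zsmul]
      have hz : ((pp i ^ ee i : ℕ) : ℤ) •
          ((0, DirectSum.of (fun j => ZMod (pp j ^ ee j)) i 1) :
            (Fin n →₀ ℤ) × DirectSum ι fun j => ZMod (pp j ^ ee j)) = 0 := by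
        apply Prod.ext
        · simp
        · show ((pp i ^ ee i : ℕ) : ℤ) • DirectSum.of (fun j => ZMod (pp j ^ ee j)) i 1 = 0
          rw [← map_zsmul]
          convert map_zero (DirectSum.of (fun j => ZMod (pp j ^ ee j)) i)
          rw [zsmul_eq_mul, mul_one, Int.cast_natCast, ZMod.natCast_self]
      rw [hz, map_zero]
    obtain ⟨x, hx⟩ := mem_of_mk'_eq_zero hq0
    obtain ⟨y, hy⟩ := hg.2 ((pp i ^ ee i : ℕ) : ℤ) x ⟨w, hx.symm⟩
    refine ⟨w - g y, ?_, ?_⟩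
    · rw [map_sub, hw]
      have : qm (g y) = 0 := mk'_eq_zero_of_mem ⟨y, rfl⟩
      rw [this, sub_zero]
    · rw [smul_sub, ← map_zsmul g, hy, hx, sub_self]
  choose v hv1 hv2 using tors
  set sFree : (Fin n →₀ ℤ) →+ T := Finsupp.liftAddHom (fun i => zmultiplesHom T (u i)) with hsFree
  set sTor : (DirectSum ι fun j => ZMod (pp j ^ ee j)) →+ T :=
    DirectSum.toAddMonoid (fun i => ZMod.lift _ ⟨zmultiplesHom T (v i), hv2 i⟩) with hsTor
  have hfree : ∀ w : Fin n →₀ ℤ, qm (sFree w) = eQ.symm (w, 0) := by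
    have heq : qm.comp sFree =
        (eQ.symm.toAddMonoidHom.comp (AddMonoidHom.inl (Fin n →₀ ℤ)
          (DirectSum ι fun j => ZMod (pp j ^ ee j)))) := by
      apply Finsupp.addHom_ext
      intro x y
      simp only [AddMonoidHom.coe_comp, Function.comp_apply, AddMonoidHom.inl_apply,
        AddEquiv.coe_toAddMonoidHom]
      rw [hsFree]
      rw [Finsupp.liftAddHom_apply_single, zmultiplesHom_apply, map_zsmul, hu x, ← map_zsmul]
      congr 1
      apply Prod.ext
      · simp [Finsupp.smul_single]
      · simp
    intro w
    have := DFunLike.congr_fun heq w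
    simpa using this
  have htor : ∀ w : DirectSum ι fun j => ZMod (pp j ^ ee j),
      qm (sTor w) = eQ.symm (0, w) := by
    have heq : qm.comp sTor =
        (eQ.symm.toAddMonoidHom.comp (AddMonoidHom.inr (Fin n →₀ ℤ)
          (DirectSum ι fun j => ZMod (pp j ^ ee j)))) := by
      apply DirectSum.addHom_ext
      intro i y
      obtain ⟨z, rfl⟩ := ZMod.intCast_surjective y
      simp only [AddMonoidHom.coe_comp, Function.comp_apply, AddMonoidHom.inr_apply,
        AddEquiv.coe_toAddMonoidHom]
      rw [hsTor, DirectSum.toAddMonoid_of, ZMod.lift_coe]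
      show qm (z • v i) = _
      rw [map_zsmul, hv1 i, ← map_zsmul]
      congr 1
      apply Prod.ext
      · simp
      · show z • DirectSum.of (fun j => ZMod (pp j ^ ee j)) i 1 = _
        rw [← map_zsmul]
        congr 1
        rw [zsmul_eq_mul, mul_one]
    intro w
    have := DFunLike.congr_fun heq w
    simpa using this
  set sW : ((Fin n →₀ ℤ) × DirectSum ι fun j => ZMod (pp j ^ ee j)) →+ T :=
    sFree.comp (AddMonoidHom.fst _ _) + sTor.comp (AddMonoidHom.snd _ _) with hsW
  have hsec : ∀ z : T ⧸ R, qm (sW (eQ z)) = z := by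
    intro z
    have h1 : qm (sW (eQ z)) = eQ.symm ((eQ z).1, 0) + eQ.symm (0, (eQ z).2) := by
      rw [hsW]
      simp only [AddMonoidHom.add_apply, AddMonoidHom.coe_comp, Function.comp_apply]
      rw [map_add, hfree, htor]
      rfl
    rw [← map_add] at h1
    have h2 : (((eQ z).1, 0) : (Fin n →₀ ℤ) × DirectSum ι fun j => ZMod (pp j ^ ee j))
        + (0, (eQ z).2) = eQ z := by
      apply Prod.ext <;> simp
    rw [h2, AddEquiv.symm_apply_apply] at h1
    exact h1
  set ρ : T →+ T := AddMonoidHom.id T - (sW.comp (eQ.toAddMonoidHom.comp qm)) with hρ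
  have hρmem : ∀ x : T, ρ x ∈ R := by
    intro x
    have h1 : qm (ρ x) = 0 := by
      rw [hρ]
      simp only [AddMonoidHom.sub_apply, AddMonoidHom.id_apply, AddMonoidHom.coe_comp,
        Function.comp_apply, AddEquiv.coe_toAddMonoidHom, map_sub]
      rw [hsec (qm x), sub_self]
    exact mem_of_mk'_eq_zero h1
  set e := AddMonoidHom.ofInjective hg.1 with he
  refine ⟨e.symm.toAddMonoidHom.comp (AddMonoidHom.codRestrict ρ R hρmem), ?_⟩
  intro x
  have h1 : ρ (g x) = g x := by
    rw [hρ]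
    simp only [AddMonoidHom.sub_apply, AddMonoidHom.id_apply, AddMonoidHom.coe_comp,
      Function.comp_apply, AddEquiv.coe_toAddMonoidHom]
    have h2 : qm (g x) = 0 := mk'_eq_zero_of_mem ⟨x, rfl⟩
    rw [h2, map_zero, map_zero, sub_zero]
  have h3 : (AddMonoidHom.codRestrict ρ R hρmem) (g x) = e x := by
    apply Subtype.ext
    show ρ (g x) = _
    rw [h1]
    exact (AddMonoidHom.ofInjective_apply hg.1).symm
  simp only [AddMonoidHom.coe_comp, Function.comp_apply, AddEquiv.coe_toAddMonoidHom]
  rw [h3, AddEquiv.symm_apply_apply]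

theorem isPureInjective_of_finite (A : Type) [AddCommGroup A] [Finite A] :
    IsPureInjective A := by
  intro K _ g hg
  classical
  letI : TopologicalSpace A := ⊥
  haveI : DiscreteTopology A := ⟨rfl⟩
  haveI : ContinuousAdd A := ⟨continuous_of_discreteTopology⟩
  let Cst : (K × K) ⊕ A → Set (K → A) := fun i =>
    Sum.rec (fun xy => {f | f (xy.1 + xy.2) = f xy.1 + f xy.2}) (fun a => {f | f (g a) = a}) i
  have hclosed : ∀ i, IsClosed (Cst i) := by
    rintro (⟨x, y⟩ | a)
    · exact isClosed_eq (continuous_apply _) ((continuous_apply x).add (continuous_apply y))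
    · exact isClosed_eq (continuous_apply _) continuous_const
  have hfip : ∀ uu : Finset ((K × K) ⊕ A), (Set.univ ∩ ⋂ i ∈ uu, Cst i).Nonempty := by
    intro uu
    let E : (K × K) ⊕ A → Finset K := fun i =>
      Sum.rec (fun xy => {xy.1, xy.2, xy.1 + xy.2}) (fun _ => ∅) i
    let S : Set K := ↑(uu.biUnion E) ∪ Set.range g
    have hSfin : S.Finite := (uu.biUnion E).finite_toSet.union (Set.finite_range g)
    set T := AddSubgroup.closure S with hT
    haveI : AddGroup.FG ↥T :=
      (AddGroup.fg_iff_addSubgroup_fg T).mpr ((AddSubgroup.fg_iff T).mpr ⟨S, rfl, hSfin⟩)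
    have hrange : ∀ a : A, g a ∈ T := fun a =>
      AddSubgroup.subset_closure (Or.inr ⟨a, rfl⟩)
    let g' : A →+ ↥T := g.codRestrict T hrange
    have hg' : IsPureMono g' := by
      constructor
      · intro a b hab
        exact hg.1 (congrArg Subtype.val hab)
      · rintro m a ⟨x, hx⟩
        refine hg.2 m a ⟨(x : K), ?_⟩
        have := congrArg Subtype.val hx
        simpa [g'] using this
    obtain ⟨r, hr⟩ := retraction_of_fg g' hg'
    refine ⟨fun k => if h : k ∈ T then r ⟨k, h⟩ else 0, Set.mem_univ _, ?_⟩
    rw [Set.mem_iInter₂]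
    rintro (⟨x, y⟩ | a) hi
    · have hx : x ∈ T := AddSubgroup.subset_closure
        (Or.inl (Finset.mem_coe.mpr (Finset.mem_biUnion.mpr ⟨_, hi, by simp [E]⟩)))
      have hy : y ∈ T := AddSubgroup.subset_closure
        (Or.inl (Finset.mem_coe.mpr (Finset.mem_biUnion.mpr ⟨_, hi, by simp [E]⟩)))
      have hxy : x + y ∈ T := AddSubgroup.subset_closure
        (Or.inl (Finset.mem_coe.mpr (Finset.mem_biUnion.mpr ⟨_, hi, by simp [E]⟩)))
      show (if h : x + y ∈ T then r ⟨x + y, h⟩ else 0) =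
        (if h : x ∈ T then r ⟨x, h⟩ else 0) + (if h : y ∈ T then r ⟨y, h⟩ else 0)
      rw [dif_pos hxy, dif_pos hx, dif_pos hy]
      have : (⟨x + y, hxy⟩ : ↥T) = ⟨x, hx⟩ + ⟨y, hy⟩ := rfl
      rw [this, map_add]
    · have hga : g a ∈ T := hrange a
      show (if h : g a ∈ T then r ⟨g a, h⟩ else 0) = a
      rw [dif_pos hga]
      exact hr a
  have hne : (Set.univ ∩ ⋂ i, Cst i).Nonempty := by
    by_contra hcon
    rw [Set.not_nonempty_iff_eq_empty] at hcon
    obtain ⟨uu, huu⟩ := (isCompact_univ (X := K → A)).elim_finite_subfamily_closed Cst hclosed hcon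
    exact (hfip uu).ne_empty huu
  obtain ⟨f, -, hf⟩ := hne
  rw [Set.mem_iInter] at hf
  have hadd : ∀ x y : K, f (x + y) = f x + f y := fun x y => hf (Sum.inl (x, y))
  refine ⟨AddMonoidHom.mk' f hadd, AddMonoidHom.ext fun a => ?_⟩
  exact hf (Sum.inr a)

theorem zmod_exists_root {p : ℕ} (hp : p.Prime) {t k : ℕ} (hk : k ≤ t)
    (x : ZMod (p ^ (t + 1))) (hx : p ^ (t - k) • x = 0) :
    ∃ y : ZMod (p ^ (t + 1)), p ^ (k + 1) • y = x := by
  haveI : NeZero (p ^ (t + 1)) := ⟨pow_ne_zero _ hp.pos.ne'⟩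
  have h1 : ((p ^ (t - k) * x.val : ℕ) : ZMod (p ^ (t + 1))) = 0 := by
    have e1 : ((p ^ (t - k) * x.val : ℕ) : ZMod (p ^ (t + 1)))
        = ((p ^ (t - k) : ℕ) : ZMod (p ^ (t + 1))) * ((x.val : ℕ) : ZMod (p ^ (t + 1))) := by
      push_cast
      ring
    rw [e1, ZMod.natCast_rightInverse x, ← nsmul_eq_mul, hx]
  have h2 : p ^ (t + 1) ∣ p ^ (t - k) * x.val :=
    (ZMod.natCast_eq_zero_iff _ _).mp h1
  have h3 : p ^ (k + 1) ∣ x.val := by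
    have h4 : p ^ (t - k) * p ^ (k + 1) ∣ p ^ (t - k) * x.val := by
      rw [← pow_add, show t - k + (k + 1) = t + 1 by omega]
      exact h2
    exact (Nat.mul_dvd_mul_iff_left (pow_pos hp.pos _)).mp h4
  obtain ⟨c, hc⟩ := h3
  refine ⟨(c : ZMod (p ^ (t + 1))), ?_⟩
  have e2 : p ^ (k + 1) • (c : ZMod (p ^ (t + 1))) = ((p ^ (k + 1) * c : ℕ) : ZMod (p ^ (t + 1))) := by
    push_cast
    rw [nsmul_eq_mul]
    push_cast
    ring
  rw [e2, ← hc]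
  exact ZMod.natCast_rightInverse x

/-- if `s` is the least natural number with `B ∩ p^t M = B ∩ p^s M` for all
`t ≥ s`, then for `t ≥ s` the cyclic group `ℤ(p^{t+1})` is not a direct summand of the
pure injective hull of `M` over `B`. -/
theorem statement3 (p : ℕ) (hp : p.Prime) (M : Type) [AddCommGroup M]
    (hM : ∀ x : M, ∃ k : ℕ, p ^ k • x = 0)
    (B : AddSubgroup M) (hB : Finite B) (s : ℕ)
    (hs : IsLeast {s' : ℕ | ∀ t : ℕ, s' ≤ t →
      B ⊓ smulSub (p ^ t) M = B ⊓ smulSub (p ^ s') M} s)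
    (H : Type) [AddCommGroup H] (ι : B →+ H)
    (hH : IsPureInjHullOver p M B H ι)
    (t : ℕ) (ht : s ≤ t) :
    ¬ ∃ (C H' : AddSubgroup H), IsCompl C H' ∧ Nonempty (C ≃+ ZMod (p ^ (t + 1))) := by
  rintro ⟨C, H', hcompl, ⟨eqC⟩⟩
  classical
  haveI : NeZero (p ^ (t + 1)) := ⟨pow_ne_zero _ hp.pos.ne'⟩
  haveI : Finite ↥C := Finite.of_equiv _ eqC.symm.toEquiv
  obtain ⟨πC, πH, hsum, hCl, hCr, hDl, hDr⟩ := exists_projections hcompl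
  have hCtor : ∀ z : ↥C, p ^ (t + 1) • z = 0 := by
    intro z
    apply eqC.injective
    rw [map_nsmul, map_zero, nsmul_eq_mul]
    rw [show ((p ^ (t + 1) : ℕ) : ZMod (p ^ (t + 1))) = 0 from ZMod.natCast_self _, zero_mul]
  -- Claim A : the C-component of ι b has extra divisibility
  have claimA : ∀ (b : ↥B) (k : ℕ), (∃ m : M, p ^ k • m = (b : M)) →
      ∃ c : ↥C, p ^ (k + 1) • c = πC (ι b) := by
    intro b k hbk
    by_cases hks : s ≤ k
    · have h1 : (b : M) ∈ B ⊓ smulSub (p ^ k) M := ⟨b.2, hbk⟩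
      rw [hs.1 k hks] at h1
      rw [← hs.1 (t + 1 + k) (by omega)] at h1
      obtain ⟨x, hx⟩ := (hH.div_iff b (t + 1 + k)).mpr h1.2
      refine ⟨p ^ t • πC x, ?_⟩
      rw [smul_smul, ← pow_add, show k + 1 + t = t + 1 + k by omega, ← map_nsmul, hx]
    · push_neg at hks
      have hkt : k ≤ t := by omega
      obtain ⟨x, hx⟩ := (hH.div_iff b k).mpr hbk
      set b₂ : ↥B := p ^ (t - k) • b with hb₂
      have hιb₂ : ι b₂ = p ^ t • x := by
        rw [hb₂, map_nsmul, ← hx, smul_smul, ← pow_add, show t - k + k = t by omega]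
      have hbt : (b₂ : M) ∈ B ⊓ smulSub (p ^ t) M :=
        ⟨b₂.2, (hH.div_iff b₂ t).mp ⟨x, hιb₂.symm⟩⟩
      rw [hs.1 t ht] at hbt
      rw [← hs.1 (t + 1) (by omega)] at hbt
      obtain ⟨x', hx'⟩ := (hH.div_iff b₂ (t + 1)).mpr hbt.2
      have hkill : p ^ (t - k) • πC (ι b) = 0 := by
        have h5 : πC (ι b₂) = p ^ (t + 1) • πC x' := by rw [← hx', map_nsmul]
        have h6 : πC (ι b₂) = p ^ (t - k) • πC (ι b) := by
          rw [hb₂, map_nsmul, map_nsmul]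
        rw [← h6, h5, hCtor]
      have hz : p ^ (t - k) • eqC (πC (ι b)) = 0 := by
        rw [← map_nsmul, hkill, map_zero]
      obtain ⟨y, hy⟩ := zmod_exists_root hp hkt _ hz
      refine ⟨eqC.symm y, ?_⟩
      apply eqC.injective
      rw [map_nsmul, AddEquiv.apply_symm_apply, hy]
  -- the subgroup p•C of H
  set mulp : ↥C →+ ↥C := zsmulAddGroupHom (p : ℤ) with hmulp
  set PD : AddSubgroup H := (C.subtype.comp mulp).range with hPD
  haveI : Finite ↥PD := by
    apply Finite.of_surjective
      (fun c : ↥C => (⟨(C.subtype.comp mulp) c, ⟨c, rfl⟩⟩ : ↥PD))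
    rintro ⟨x, c, rfl⟩
    exact ⟨c, rfl⟩
  have hmemPD : ∀ b : ↥B, ((πC (ι b) : ↥C) : H) ∈ PD := by
    intro b
    obtain ⟨c, hc⟩ := claimA b 0 ⟨(b : M), by rw [pow_zero, one_smul]⟩
    refine ⟨c, ?_⟩
    show ((mulp c : ↥C) : H) = _
    have h1 : mulp c = p • c := by
      rw [hmulp]
      show ((p : ℤ) • c) = p • c
      exact natCast_zsmul c p
    rw [h1]
    rw [zero_add, pow_one] at hc
    rw [← hc]
  set f1 : ↥B →+ ↥PD :=
    AddMonoidHom.codRestrict (C.subtype.comp (πC.comp ι)) PD hmemPD with hf1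
  set f2 : ↥B →+ ↥H' := πH.comp ι with hf2
  set g₀ : ↥B →+ (↥PD × ↥H') := f1.prod f2 with hg₀
  have hN_PI : IsPureInjective (↥PD × ↥H') :=
    isPureInjective_prod (isPureInjective_of_finite ↥PD)
      (isPureInjective_summand hH.pureInjective hcompl)
  have hdiv : ∀ (b : ↥B) (k : ℕ), (∃ m : M, p ^ k • m = (b : M)) →
      ∃ x : ↥PD × ↥H', p ^ k • x = g₀ b := by
    intro b k hbk
    obtain ⟨c, hc⟩ := claimA b k hbk
    obtain ⟨x, hx⟩ := (hH.div_iff b k).mpr hbk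
    refine ⟨(⟨(C.subtype.comp mulp) c, ⟨c, rfl⟩⟩, πH x), ?_⟩
    have hfst : p ^ k • (⟨(C.subtype.comp mulp) c, ⟨c, rfl⟩⟩ : ↥PD) = f1 b := by
      apply Subtype.ext
      show p ^ k • ((C.subtype.comp mulp) c) = ((πC (ι b) : ↥C) : H)
      have h1 : (C.subtype.comp mulp) c = p • (c : H) := by
        show ((mulp c : ↥C) : H) = p • (c : H)
        have : mulp c = p • c := natCast_zsmul c p
        rw [this]
        rfl
      rw [h1, smul_smul, ← pow_succ]
      have h2 : p ^ (k + 1) • (c : H) = ((p ^ (k + 1) • c : ↥C) : H) := rfl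
      rw [h2, hc]
    have hsnd : p ^ k • πH x = f2 b := by
      rw [hf2]
      show p ^ k • πH x = πH (ι b)
      rw [← map_nsmul, hx]
    have : p ^ k • ((⟨(C.subtype.comp mulp) c, ⟨c, rfl⟩⟩, πH x) : ↥PD × ↥H')
        = (p ^ k • (⟨(C.subtype.comp mulp) c, ⟨c, rfl⟩⟩ : ↥PD), p ^ k • πH x) := rfl
    rw [this, hfst, hsnd, hg₀]
    rfl
  obtain ⟨g, hg⟩ := hH.extends_hom (↥PD × ↥H') hN_PI g₀ hdiv
  set φ : (↥PD × ↥H') →+ H :=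
    (PD.subtype.comp (AddMonoidHom.fst _ _)) + (H'.subtype.comp (AddMonoidHom.snd _ _)) with hφ
  have hfix : ∀ b : ↥B, (φ.comp g) (ι b) = ι b := by
    intro b
    show φ (g (ι b)) = ι b
    rw [hg b, hg₀]
    show ((f1 b : H)) + ((f2 b : H)) = ι b
    have h1 : ((f1 b : H)) = ((πC (ι b) : ↥C) : H) := rfl
    have h2 : ((f2 b : H)) = ((πH (ι b) : ↥H') : H) := rfl
    rw [h1, h2]
    exact hsum (ι b)
  have hsurj := (hH.endo_bijective (φ.comp g) hfix).2
  obtain ⟨x, hx⟩ := hsurj ((eqC.symm 1 : ↥C) : H)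
  obtain ⟨cc, hcc⟩ := (g x).1.2
  have hxval : ((eqC.symm 1 : ↥C) : H) = ((mulp cc : ↥C) : H) + ((g x).2 : H) := by
    rw [← hx]
    show ((g x).1 : H) + ((g x).2 : H) = _
    rw [← hcc]
    rfl
  have hmemC : ((eqC.symm 1 : ↥C) : H) - ((mulp cc : ↥C) : H) ∈ C :=
    sub_mem (eqC.symm 1).2 (mulp cc).2
  have hmemH' : ((eqC.symm 1 : ↥C) : H) - ((mulp cc : ↥C) : H) ∈ H' := by
    rw [hxval]
    simpa using ((g x).2).2
  have hzero : ((eqC.symm 1 : ↥C) : H) - ((mulp cc : ↥C) : H) = 0 :=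
    AddSubgroup.disjoint_def.mp hcompl.disjoint hmemC hmemH'
  have heq : (eqC.symm 1 : ↥C) = p • cc := by
    apply Subtype.ext
    have h1 := sub_eq_zero.mp hzero
    rw [h1]
    show ((mulp cc : ↥C) : H) = ((p • cc : ↥C) : H)
    congr 1
    exact natCast_zsmul cc p
  have h1 : (1 : ZMod (p ^ (t + 1))) = p • eqC cc := by
    have := congrArg eqC heq
    rwa [AddEquiv.apply_symm_apply, map_nsmul] at this
  have h3 : (p : ℕ) ^ t • (1 : ZMod (p ^ (t + 1))) = 0 := by
    rw [h1, smul_smul, ← pow_succ, ← map_nsmul, hCtor, map_zero]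
  have h4 : ((p ^ t : ℕ) : ZMod (p ^ (t + 1))) = 0 := by
    rw [← mul_one ((p ^ t : ℕ) : ZMod (p ^ (t + 1))), ← nsmul_eq_mul]
    exact h3
  have h5 : p ^ (t + 1) ∣ p ^ t := (ZMod.natCast_eq_zero_iff _ _).mp h4
  have h6 := (Nat.pow_dvd_pow_iff_le_right hp.one_lt).mp h5
  omega
end

section
/- Let p be a prime and let G = ⊕_{n=1}^∞ ℤ(p^n) ⊕ ℤ(p^∞). There exist a reduced abelian p-group H and a pure monomorphism f : H → G such that f(H) ∩ d(G) ≠ 0, where d(G) is the largest divisible subgroup of G. In particular, a pure monomorphism of torsion abelian groups need not map the reduced part into the reduced part. -/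
open DirectSum

/-! ### Auxiliary constructions for `statement7` -/

namespace Statement7Aux

open DirectSum

/-- The class of `p^{-n}` in `ℚ/ℤ`. -/
def cQ (p n : ℕ) : AddCircle (1 : ℚ) := (((p : ℚ) ^ n)⁻¹ : ℚ)

lemma cQ_zero (p : ℕ) : cQ p 0 = 0 := by
  rw [cQ]
  norm_num

lemma cQ_spec (p : ℕ) (hp : p ≠ 0) (m n : ℕ) : p ^ m • cQ p (m + n) = cQ p n := by
  rw [cQ, cQ, ← AddCircle.coe_nsmul]
  congr 1
  have hpQ : (p : ℚ) ≠ 0 := Nat.cast_ne_zero.mpr hp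
  field_simp
  have h1 : (p:ℚ)^m * ((p:ℚ)⁻¹)^m = 1 := by rw [← mul_pow, mul_inv_cancel₀ hpQ, one_pow]
  have h2 : (p:ℚ)^n * ((p:ℚ)⁻¹)^n = 1 := by rw [← mul_pow, mul_inv_cancel₀ hpQ, one_pow]
  linear_combination ((p:ℚ)^n * ((p:ℚ)⁻¹)^n) * h1 + h2

lemma cQ_torsion (p n : ℕ) : p ^ n • cQ p n = 0 := by
  rcases Nat.eq_zero_or_pos p with rfl | hp
  · cases n with
    | zero => simpa using cQ_zero 0
    | succ k => simp [zero_pow]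
  · have := cQ_spec p hp.ne' n 0
    rw [Nat.add_zero] at this
    rw [this, cQ_zero]

/-- The element of order `p^n` in the Prüfer group. -/
def cP (p n : ℕ) : Prufer p := ⟨cQ p n, n, cQ_torsion p n⟩

lemma cP_zero (p : ℕ) : cP p 0 = 0 := Subtype.ext (cQ_zero p)

lemma cP_spec (p : ℕ) (hp : p ≠ 0) (m n : ℕ) : p ^ m • cP p (m + n) = cP p n := by
  apply Subtype.ext
  show p ^ m • cQ p (m + n) = cQ p n
  exact cQ_spec p hp m n

lemma cP_one_ne_zero (p : ℕ) (hp : p.Prime) : cP p 1 ≠ 0 := by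
  intro h
  have h2 : cQ p 1 = 0 := congrArg Subtype.val h
  rw [cQ, pow_one, AddCircle.coe_eq_zero_iff] at h2
  obtain ⟨z, hz⟩ := h2
  have hpQ : (p : ℚ) ≠ 0 := Nat.cast_ne_zero.mpr hp.ne_zero
  have hz' : (z : ℚ) = (p : ℚ)⁻¹ := by simpa using hz
  have : ((z * p : ℤ) : ℚ) = 1 := by push_cast; rw [hz']; field_simp
  have hzp : (z * p : ℤ) = 1 := by exact_mod_cast this
  have : (p : ℤ) ∣ 1 := ⟨z, by linarith [hzp]⟩
  have h2 := Int.le_of_dvd one_pos this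
  have := hp.two_le
  omega

abbrev B (p : ℕ) := ⨁ n : ℕ, ZMod (p ^ (n + 1))

abbrev G (p : ℕ) := B p × Prufer p

def C (p : ℕ) : AddSubgroup (Prufer p) := AddSubgroup.zmultiples (cP p 1)

abbrev Q (p : ℕ) := Prufer p ⧸ C p

def pr (p : ℕ) : Prufer p →+ Q p := QuotientAddGroup.mk' (C p)

lemma pr_cP_one (p : ℕ) : pr p (cP p 1) = 0 := by
  rw [pr, QuotientAddGroup.mk'_apply, QuotientAddGroup.eq_zero_iff]
  exact AddSubgroup.mem_zmultiples _

lemma pr_eq_zero_iff (p : ℕ) (x : Prufer p) : pr p x = 0 ↔ x ∈ C p := by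
  rw [pr, QuotientAddGroup.mk'_apply, QuotientAddGroup.eq_zero_iff]

def phi (p : ℕ) (hp : p ≠ 0) (n : ℕ) : ZMod (p ^ (n + 1)) →+ Q p :=
  ZMod.lift _ ⟨zmultiplesHom _ (pr p (cP p (n + 2))), by
    show ((p ^ (n+1) : ℕ) : ℤ) • pr p (cP p (n + 2)) = 0
    rw [natCast_zsmul, ← map_nsmul]
    have := cP_spec p hp (n+1) 1
    rw [show n+1+1 = n+2 by ring] at this
    rw [this, pr_cP_one]⟩

lemma phi_intCast (p : ℕ) (hp : p ≠ 0) (n : ℕ) (j : ℤ) :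
    phi p hp n ((j : ℤ) : ZMod (p ^ (n + 1))) = j • pr p (cP p (n + 2)) := by
  rw [phi, ZMod.lift_coe]
  rfl

def tau (p : ℕ) (hp : p ≠ 0) : B p →+ Q p := DirectSum.toAddMonoid (fun n => phi p hp n)

lemma tau_of (p : ℕ) (hp : p ≠ 0) (n : ℕ) (a : ZMod (p ^ (n + 1))) :
    tau p hp (DirectSum.of (fun n => ZMod (p ^ (n + 1))) n a) = phi p hp n a :=
  DirectSum.toAddMonoid_of _ _ _

/-- The pure subgroup: pairs `(b, t)` with `t ≡ τ(b)` modulo the cyclic group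
generated by `c₁`. -/
def Hsub (p : ℕ) (hp : p ≠ 0) : AddSubgroup (G p) where
  carrier := {x | pr p x.2 = tau p hp x.1}
  zero_mem' := by simp
  add_mem' := by
    intro a b ha hb
    show pr p (a.2 + b.2) = tau p hp (a.1 + b.1)
    rw [map_add, map_add, ha, hb]
  neg_mem' := by
    intro a ha
    show pr p (-a.2) = tau p hp (-a.1)
    rw [map_neg, map_neg, ha]

lemma mem_Hsub (p : ℕ) (hp : p ≠ 0) (x : G p) :
    x ∈ Hsub p hp ↔ pr p x.2 = tau p hp x.1 := Iff.rfl

lemma kill_mono {M : Type} [AddCommMonoid M] (p : ℕ) {k K : ℕ} (h : k ≤ K) {x : M}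
    (hx : p ^ k • x = 0) : p ^ K • x = 0 := by
  obtain ⟨d, rfl⟩ := Nat.exists_eq_add_of_le h
  rw [pow_add, mul_comm, mul_smul, hx, smul_zero]

lemma B_torsion (p : ℕ) (b : B p) : ∃ k, p ^ k • b = 0 := by
  induction b using DirectSum.induction_on with
  | zero => exact ⟨0, smul_zero _⟩
  | of n a =>
      refine ⟨n + 1, ?_⟩
      rw [← map_nsmul]
      have : p ^ (n + 1) • a = 0 := by
        rw [nsmul_eq_mul, ZMod.natCast_self, zero_mul]
      rw [this, map_zero]
  | add x y hx hy =>
      obtain ⟨k, hk⟩ := hx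
      obtain ⟨l, hl⟩ := hy
      exact ⟨max k l, by rw [smul_add, kill_mono p (le_max_left k l) hk,
        kill_mono p (le_max_right k l) hl, add_zero]⟩

lemma Prufer_torsion (p : ℕ) (t : Prufer p) : ∃ k, p ^ k • t = 0 := by
  obtain ⟨k, hk⟩ := t.2
  exact ⟨k, Subtype.ext hk⟩

lemma G_torsion (p : ℕ) (v : G p) : ∃ k, p ^ k • v = 0 := by
  obtain ⟨k, hk⟩ := B_torsion p v.1
  obtain ⟨l, hl⟩ := Prufer_torsion p v.2
  refine ⟨max k l, Prod.ext ?_ ?_⟩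
  · show p ^ max k l • v.1 = 0
    exact kill_mono p (le_max_left k l) hk
  · show p ^ max k l • v.2 = 0
    exact kill_mono p (le_max_right k l) hl

lemma Prufer_div (p : ℕ) (hp : p ≠ 0) (t : Prufer p) (m : ℕ) :
    ∃ y : Prufer p, p ^ m • y = t := by
  obtain ⟨r, hr⟩ : ∃ r : ℚ, (r : AddCircle (1 : ℚ)) = t.1 := Quot.exists_rep t.1
  have hpQ : ((p : ℚ) ^ m) ≠ 0 := pow_ne_zero _ (Nat.cast_ne_zero.mpr hp)
  have hy : p ^ m • ((r / (p : ℚ) ^ m : ℚ) : AddCircle (1 : ℚ)) = t.1 := by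
    rw [← AddCircle.coe_nsmul, nsmul_eq_mul]
    push_cast
    rw [mul_div_cancel₀ _ hpQ, hr]
  obtain ⟨k, hk⟩ := t.2
  refine ⟨⟨((r / (p : ℚ) ^ m : ℚ) : AddCircle (1 : ℚ)), k + m, ?_⟩, Subtype.ext hy⟩
  rw [pow_add, mul_smul, hy, hk]

/-- Factor out the `p`-part of a nonzero integer. -/
lemma int_factor (p : ℕ) (hp : p.Prime) {n : ℤ} (hn : n ≠ 0) :
    ∃ (m : ℕ) (u : ℤ), ¬ (p : ℤ) ∣ u ∧ n = (p : ℤ) ^ m * u := by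
  obtain ⟨k, m', hm', habs⟩ := Nat.exists_eq_pow_mul_and_not_dvd
    (Int.natAbs_ne_zero.mpr hn) p hp.ne_one
  rcases Int.natAbs_eq n with h | h
  · refine ⟨k, (m' : ℤ), ?_, ?_⟩
    · rw [Int.natCast_dvd_natCast]; simpa using hm'
    · rw [h, habs]; push_cast; ring
  · refine ⟨k, -(m' : ℤ), ?_, ?_⟩
    · rw [dvd_neg, Int.natCast_dvd_natCast]; simpa using hm'
    · rw [h, habs]; push_cast; ring

/-- Divide by `n = p^m * u` given division by `p^m` and `p`-power torsion. -/
lemma zsmul_div {M : Type} [AddCommGroup M] (p : ℕ) {u : ℤ} (hu : ¬ (p : ℤ) ∣ u)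
    (hp : p.Prime) {m : ℕ} {w v : M} (hw : p ^ m • w = v) (hT : ∃ N : ℕ, p ^ N • w = 0) :
    ∃ a : ℤ, ((p : ℤ) ^ m * u) • (a • w) = v := by
  obtain ⟨N, hN⟩ := hT
  have hcop : IsCoprime ((p : ℤ) ^ N) u := by
    refine IsCoprime.pow_left ?_
    exact ((Nat.prime_iff_prime_int.mp hp).coprime_iff_not_dvd).mpr hu
  obtain ⟨a, b, hab⟩ := hcop
  refine ⟨b, ?_⟩
  have hNz : ((p : ℤ) ^ N) • w = 0 := by
    rw [show ((p:ℤ)^N) = ((p^N : ℕ) : ℤ) by push_cast; ring, natCast_zsmul, hN]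
  calc ((p : ℤ) ^ m * u) • (b • w) = (p : ℤ) ^ m • ((u * b) • w) := by
        rw [smul_smul, smul_smul]; ring_nf
    _ = (p : ℤ) ^ m • ((1 - a * (p : ℤ) ^ N) • w) := by
        rw [show u * b = 1 - a * (p:ℤ)^N by linarith [hab]]
    _ = (p : ℤ) ^ m • (w - a • (((p : ℤ) ^ N) • w)) := by
        rw [sub_smul, one_smul, smul_smul]
    _ = (p : ℤ) ^ m • w := by rw [hNz, smul_zero, sub_zero]
    _ = v := by rw [show ((p:ℤ)^m) = ((p^m : ℕ) : ℤ) by push_cast; ring, natCast_zsmul, hw]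

/-- The key purity property of `Hsub` for powers of `p`. -/
lemma pure_pow (p : ℕ) (hp : p ≠ 0) (m : ℕ) (v x : G p) (hv : v ∈ Hsub p hp)
    (hx : p ^ m • x = v) : ∃ w ∈ Hsub p hp, p ^ m • w = v := by
  cases m with
  | zero => exact ⟨v, hv, by simp⟩
  | succ m' =>
    obtain ⟨y₀, hy₀⟩ := QuotientAddGroup.mk'_surjective (C p) (tau p hp x.1)
    have hy₀' : pr p y₀ = tau p hp x.1 := hy₀
    have hx1 : p ^ (m' + 1) • x.1 = v.1 := congrArg Prod.fst hx
    have hmem : p ^ (m' + 1) • y₀ - v.2 ∈ C p := by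
      rw [← pr_eq_zero_iff, map_sub, map_nsmul, hy₀', hv.out, ← hx1, map_nsmul, sub_self]
    obtain ⟨j, hj⟩ := AddSubgroup.mem_zmultiples_iff.mp hmem
    refine ⟨(x.1 - DirectSum.of (fun n => ZMod (p ^ (n + 1))) m' ((j : ℤ) : ZMod (p ^ (m' + 1))),
      y₀ - j • cP p (m' + 1 + 1)), ?_, ?_⟩
    · show pr p _ = tau p hp _
      rw [map_sub, map_sub, hy₀', map_zsmul, tau_of, phi_intCast]
    · have hu0 : p ^ (m' + 1) •
          DirectSum.of (fun n => ZMod (p ^ (n + 1))) m' ((j : ℤ) : ZMod (p ^ (m' + 1))) = 0 := by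
        rw [← map_nsmul]
        have : p ^ (m' + 1) • ((j : ℤ) : ZMod (p ^ (m' + 1))) = 0 := by
          rw [nsmul_eq_mul, ZMod.natCast_self, zero_mul]
        rw [this, map_zero]
      refine Prod.ext ?_ ?_
      · show p ^ (m' + 1) • (x.1 - _) = v.1
        rw [smul_sub, hu0, sub_zero, hx1]
      · show p ^ (m' + 1) • (y₀ - j • cP p (m' + 1 + 1)) = v.2
        rw [smul_sub, smul_comm, cP_spec p hp (m' + 1) 1, hj]
        abel

end Statement7Aux

/-- there are a reduced `p`-group `H` and a pure monomorphism
`f : H → ⊕_{n=1}^∞ ℤ(p^n) ⊕ ℤ(p^∞)` whose image meets the largest divisible subgroup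
nontrivially. -/
theorem statement7 (p : ℕ) (hp : p.Prime) :
    ∃ (H : AddCommGrpCat.{0}),
      (∀ x : H, ∃ k : ℕ, p ^ k • x = 0) ∧
      (∀ D : AddSubgroup H, DivisibleSub D → D = ⊥) ∧
      ∃ f : H →+ (⨁ n : ℕ, ZMod (p ^ (n + 1))) × Prufer p,
        IsPureMono f ∧
        ∃ x : (⨁ n : ℕ, ZMod (p ^ (n + 1))) × Prufer p,
          x ∈ f.range ∧ x ∈ maxDivisible ((⨁ n : ℕ, ZMod (p ^ (n + 1))) × Prufer p) ∧
          x ≠ 0 := by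
  classical
  have hp0 : p ≠ 0 := hp.ne_zero
  open Statement7Aux in
  refine ⟨AddCommGrpCat.of ↥(Statement7Aux.Hsub p hp0), ?_, ?_, ?_⟩
  · -- `H` is a `p`-group
    intro x
    obtain ⟨k, hk⟩ := Statement7Aux.G_torsion p (x.val)
    refine ⟨k, Subtype.ext ?_⟩
    exact (map_nsmul ((Statement7Aux.Hsub p hp0).subtype) _ _).trans hk
  · -- `H` is reduced
    intro D hD
    rw [AddSubgroup.eq_bot_iff_forall]
    have key : ∀ x : ↥(Statement7Aux.Hsub p hp0), x ∈ D → p • x = 0 := by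
      intro x hx
      have hfst : (x.val).1 = 0 := by
        refine DFinsupp.ext fun n => ?_
        obtain ⟨y, hyD, hy⟩ := hD ((p : ℤ) ^ (n + 1))
          (by positivity) x hx
        rw [show ((p : ℤ) ^ (n + 1)) = ((p ^ (n + 1) : ℕ) : ℤ) by push_cast; ring,
          natCast_zsmul] at hy
        set E : ↥(Statement7Aux.Hsub p hp0) →+ ZMod (p ^ (n + 1)) :=
          ((DirectSum.component ℕ ℕ (fun i => ZMod (p ^ (i + 1))) n).toAddMonoidHom.comp
            ((AddMonoidHom.fst (Statement7Aux.B p) (Prufer p)).comp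
              ((Statement7Aux.Hsub p hp0).subtype))) with hE
        have h1 : E x = p ^ (n + 1) • E y := by rw [← hy, map_nsmul]
        have h2 : p ^ (n + 1) • E y = 0 := by
          rw [nsmul_eq_mul, ZMod.natCast_self, zero_mul]
        have h3 : E x = 0 := h1.trans h2
        exact h3
      have hsnd : p • (x.val).2 = 0 := by
        have hm : Statement7Aux.pr p (x.val).2 = 0 := by
          have := x.2.out
          rw [this, hfst, map_zero]
        obtain ⟨j, hj⟩ := AddSubgroup.mem_zmultiples_iff.mp
          ((Statement7Aux.pr_eq_zero_iff p _).mp hm)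
        have hc : p • Statement7Aux.cP p 1 = 0 := by
          have := Statement7Aux.cP_spec p hp0 1 0
          rw [pow_one] at this
          rw [show (1 : ℕ) + 0 = 1 by ring] at this
          rw [this, Statement7Aux.cP_zero]
        rw [← hj, smul_comm, hc, smul_zero]
      apply Subtype.ext
      refine ((map_nsmul ((Statement7Aux.Hsub p hp0).subtype) _ _).trans ?_)
      refine Prod.ext ?_ ?_
      · show p • (x.val).1 = 0
        rw [hfst, smul_zero]
      · exact hsnd
    intro x hx
    obtain ⟨y, hyD, hy⟩ := hD (p : ℤ) (by exact_mod_cast hp0) x hx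
    rw [← hy, natCast_zsmul, key y hyD]
  · -- the pure monomorphism
    refine ⟨(Statement7Aux.Hsub p hp0).subtype, ⟨Subtype.coe_injective, ?_⟩, ?_⟩
    · intro n melt hex
      obtain ⟨x, hxeq⟩ := hex
      by_cases hn : n = 0
      · subst hn
        have h0 : (Statement7Aux.Hsub p hp0).subtype melt = 0 := by
          have := hxeq.symm
          rwa [zero_smul] at this
        have hm0 : melt = 0 := Subtype.coe_injective (by simpa using h0)
        exact ⟨0, by rw [hm0, smul_zero]⟩
      · obtain ⟨m, u, hu, rfl⟩ := Statement7Aux.int_factor p hp hn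
        have hxeq' : p ^ m • (u • x) = melt.val := by
          rw [← natCast_zsmul, smul_smul,
            show (((p ^ m : ℕ) : ℤ) * u) = (p : ℤ) ^ m * u by push_cast; ring]
          exact hxeq
        obtain ⟨w, hwmem, hw⟩ := Statement7Aux.pure_pow p hp0 m melt.val (u • x) melt.2 hxeq'
        have hWsm : p ^ m • (⟨w, hwmem⟩ : ↥(Statement7Aux.Hsub p hp0)) = melt := by
          apply Subtype.ext
          exact (map_nsmul ((Statement7Aux.Hsub p hp0).subtype) _ _).trans hw
        obtain ⟨k, hk⟩ := Statement7Aux.G_torsion p w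
        have hWT : p ^ k • (⟨w, hwmem⟩ : ↥(Statement7Aux.Hsub p hp0)) = 0 := by
          apply Subtype.ext
          exact (map_nsmul ((Statement7Aux.Hsub p hp0).subtype) _ _).trans hk
        obtain ⟨a, ha⟩ := Statement7Aux.zsmul_div p hu hp hWsm ⟨k, hWT⟩
        exact ⟨a • ⟨w, hwmem⟩, ha⟩
    · have hmem : ((0 : Statement7Aux.B p), Statement7Aux.cP p 1) ∈
          Statement7Aux.Hsub p hp0 := by
        show Statement7Aux.pr p (Statement7Aux.cP p 1) = Statement7Aux.tau p hp0 0
        rw [map_zero, Statement7Aux.pr_cP_one]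
      refine ⟨((0 : Statement7Aux.B p), Statement7Aux.cP p 1), ⟨⟨_, hmem⟩, rfl⟩, ?_, ?_⟩
      · -- in the maximal divisible subgroup
        have hDdiv : DivisibleSub
            ((⊥ : AddSubgroup (Statement7Aux.B p)).prod (⊤ : AddSubgroup (Prufer p))) := by
          intro n hn x hx
          rw [AddSubgroup.mem_prod] at hx
          have hx1 : x.1 = 0 := AddSubgroup.mem_bot.mp hx.1
          obtain ⟨m, u, hu, rfl⟩ := Statement7Aux.int_factor p hp hn
          obtain ⟨s, hs⟩ := Statement7Aux.Prufer_div p hp0 x.2 m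
          obtain ⟨a, ha⟩ := Statement7Aux.zsmul_div p hu hp hs
            (Statement7Aux.Prufer_torsion p s)
          refine ⟨((0 : Statement7Aux.B p), a • s),
            AddSubgroup.mem_prod.mpr ⟨AddSubgroup.mem_bot.mpr rfl, trivial⟩, ?_⟩
          refine Prod.ext ?_ ?_
          · have := map_zsmul (AddMonoidHom.fst (Statement7Aux.B p) (Prufer p))
              ((p : ℤ) ^ m * u) ((0 : Statement7Aux.B p), a • s)
            refine this.trans ?_
            rw [hx1]
            exact smul_zero _
          · have := map_zsmul (AddMonoidHom.snd (Statement7Aux.B p) (Prufer p))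
              ((p : ℤ) ^ m * u) ((0 : Statement7Aux.B p), a • s)
            exact this.trans ha
        have hle : ((⊥ : AddSubgroup (Statement7Aux.B p)).prod (⊤ : AddSubgroup (Prufer p))) ≤
            maxDivisible ((⨁ n : ℕ, ZMod (p ^ (n + 1))) × Prufer p) := le_sSup hDdiv
        exact hle (AddSubgroup.mem_prod.mpr ⟨AddSubgroup.mem_bot.mpr rfl, trivial⟩)
      · intro h
        exact Statement7Aux.cP_one_ne_zero p hp (congrArg Prod.snd h)
end

section
/- Let p be a prime and let M be a reduced p-group with ⋂_{k∈ℕ} p^k M = 0. Then for every finite subset C of M there exists a finite subgroup N of M such that C ⊆ N and N is a direct summand of M. -/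
open DirectSum

section Statement15Aux


lemma finite_sup {M : Type} [AddCommGroup M] (S T : AddSubgroup M)
    (hS : Finite S) (hT : Finite T) : Finite ↥(S ⊔ T) := by
  have hS' : (S : Set M).Finite := Set.finite_coe_iff.mp hS
  have hT' : (T : Set M).Finite := Set.finite_coe_iff.mp hT
  have hsub : ((S ⊔ T : AddSubgroup M) : Set M) ⊆ Set.image2 (· + ·) S T := by
    intro x hx
    obtain ⟨y, hy, z, hz, rfl⟩ := AddSubgroup.mem_sup.mp hx
    exact Set.mem_image2_of_mem hy hz
  exact Set.finite_coe_iff.mpr ((hS'.image2 _ hT').subset hsub)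

lemma finite_zmul {M : Type} [AddCommGroup M] (b : M) (n : ℕ) (hn : 0 < n) (h : n • b = 0) :
    Finite ↥(AddSubgroup.zmultiples b) := by
  refine Set.finite_coe_iff.mpr ?_
  exact IsOfFinAddOrder.finite_zmultiples (isOfFinAddOrder_iff_nsmul_eq_zero.mpr ⟨n, hn, h⟩)

lemma closure_fin {M : Type} [AddCommGroup M] (hM : ∀ x : M, ∃ n : ℕ, 0 < n ∧ n • x = 0)
    {C : Set M} (hC : C.Finite) : Finite ↥(AddSubgroup.closure C) := by
  refine Set.Finite.induction_on (motive := fun s _ => Finite ↥(AddSubgroup.closure s)) C hC ?_ ?_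
  · rw [AddSubgroup.closure_empty]; infer_instance
  · intro a s _ _ ih
    have h2 : insert a s = {a} ∪ s := rfl
    rw [h2, AddSubgroup.closure_union]
    obtain ⟨n, hn, h⟩ := hM a
    have h1 : AddSubgroup.closure {a} = AddSubgroup.zmultiples a := by
      simp [AddSubgroup.zmultiples_eq_closure]
    rw [h1]
    exact finite_sup _ _ (finite_zmul a n hn h) ih

lemma summand_of_order_p (p : ℕ) (hp : p.Prime) (M : Type) [AddCommGroup M]
    (hM : ∀ x : M, ∃ k : ℕ, p ^ k • x = 0)
    (h0 : pOmega p M = ⊥)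
    (a : M) (ha : a ≠ 0) (hpa : p • a = 0) :
    ∃ (S L : AddSubgroup M), Finite S ∧ a ∈ S ∧ IsCompl S L := by
  classical
  have hp1 : 1 < p := hp.one_lt
  -- find the height h of a
  have hnotall : ∃ k, a ∉ smulSub (p ^ k) M := by
    by_contra hcon
    push_neg at hcon
    have h1 : a ∈ pOmega p M := by rw [pOmega]; exact AddSubgroup.mem_iInf.mpr hcon
    rw [h0] at h1
    exact ha (by simpa using h1)
  have hk0 : a ∉ smulSub (p ^ Nat.find hnotall) M := Nat.find_spec hnotall
  have hk0pos : Nat.find hnotall ≠ 0 := by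
    intro hz
    rw [hz] at hk0
    exact hk0 (by rw [pow_zero]; exact ⟨a, one_smul ℕ a⟩)
  obtain ⟨h, hh⟩ : ∃ h, Nat.find hnotall = h + 1 :=
    ⟨Nat.find hnotall - 1, (Nat.succ_pred_eq_of_pos (Nat.pos_of_ne_zero hk0pos)).symm⟩
  have hmem : a ∈ smulSub (p ^ h) M :=
    not_not.mp (Nat.find_min hnotall (by omega : h < Nat.find hnotall))
  obtain ⟨b, hb⟩ := hmem
  have hk : a ∉ smulSub (p ^ (h + 1)) M := by rw [← hh]; exact hk0
  set S := AddSubgroup.zmultiples b with hSdef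
  have haS : a ∈ S := by
    rw [hSdef, AddSubgroup.mem_zmultiples_iff]
    exact ⟨(p ^ h : ℕ), by rw [natCast_zsmul, hb]⟩
  have hbord : (p ^ (h + 1)) • b = 0 := by
    rw [pow_succ', mul_smul, hb]; exact hpa
  have hbordz : ((p : ℤ) ^ (h + 1)) • b = 0 := by
    have : ((p : ℤ) ^ (h + 1)) = ((p ^ (h + 1) : ℕ) : ℤ) := by push_cast; ring
    rw [this, natCast_zsmul, hbord]
  have hSfin : Finite S := by
    refine Set.finite_coe_iff.mpr ?_
    exact IsOfFinAddOrder.finite_zmultiples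
      (isOfFinAddOrder_iff_nsmul_eq_zero.mpr ⟨p ^ (h + 1), by positivity, hbord⟩)
  -- trivial intersection of S with p^{h+1} M
  have hdisj : ∀ x, x ∈ smulSub (p ^ (h + 1)) M → x ∈ S → x = 0 := by
    intro x hx hxS
    obtain ⟨m, rfl⟩ := AddSubgroup.mem_zmultiples_iff.mp hxS
    obtain ⟨y, hy⟩ := hx
    by_contra hx0
    have hmod : (m % ((p : ℤ) ^ (h + 1))) • b = m • b := by
      conv_rhs => rw [← Int.emod_add_mul_ediv m ((p : ℤ) ^ (h + 1))]
      rw [add_zsmul, mul_comm ((p : ℤ) ^ (h + 1)), mul_zsmul, hbordz, smul_zero, add_zero]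
    set r : ℕ := (m % ((p : ℤ) ^ (h + 1))).toNat with hrdef
    have hppos : (0 : ℤ) < (p : ℤ) ^ (h + 1) := by positivity
    have hrpos : 0 ≤ m % ((p : ℤ) ^ (h + 1)) := Int.emod_nonneg m (by positivity)
    have hrlt : (r : ℤ) < (p : ℤ) ^ (h + 1) := by
      rw [hrdef, Int.toNat_of_nonneg hrpos]
      exact Int.emod_lt_of_pos m hppos
    have hrb : r • b = m • b := by
      rw [← natCast_zsmul b r, hrdef, Int.toNat_of_nonneg hrpos, hmod]
    have hrne : r ≠ 0 := by
      intro h0r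
      rw [h0r, zero_smul] at hrb
      exact hx0 hrb.symm
    set e := r.factorization p with hedef
    set u := r / p ^ e with hudef
    have hru : r = p ^ e * u := (Nat.ordProj_mul_ordCompl_eq_self r p).symm
    have hpu : ¬ p ∣ u := Nat.not_dvd_ordCompl hp hrne
    have he : e ≤ h := by
      have h1 : p ^ e ∣ r := Nat.ordProj_dvd r p
      have h2 : p ^ e ≤ r := Nat.le_of_dvd (Nat.pos_of_ne_zero hrne) h1
      have h3 : (p : ℤ) ^ e < (p : ℤ) ^ (h + 1) := lt_of_le_of_lt (by exact_mod_cast h2) hrlt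
      have := (pow_lt_pow_iff_right₀ (by exact_mod_cast hp1 : (1 : ℤ) < (p : ℤ))).mp h3
      omega
    have h1 : p ^ (h - e) • (r • b) = u • a := by
      rw [hru, mul_comm, mul_smul, ← smul_comm (p ^ e), ← mul_smul, ← pow_add,
        show h - e + e = h from by omega]
      rw [smul_comm, hb]
    have hrb2 : r • b = p ^ (h + 1) • y := by rw [hrb, hy]
    have key : u • a = p ^ (h + 1) • (p ^ (h - e) • y) := by
      rw [← h1, hrb2, smul_comm]
    have hcop : IsCoprime (u : ℤ) (p : ℤ) := by
      rw [Int.isCoprime_iff_gcd_eq_one]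
      simpa using (Nat.coprime_comm.mp ((Nat.Prime.coprime_iff_not_dvd hp).mpr hpu))
    obtain ⟨x1, y1, hxy⟩ := hcop
    have ha2 : a = x1 • (u • a) := by
      have h2 : ((x1 * (u : ℤ) + y1 * (p : ℤ))) • a = a := by rw [hxy, one_zsmul]
      calc a = (x1 * (u : ℤ) + y1 * (p : ℤ)) • a := h2.symm
        _ = x1 • ((u : ℤ) • a) + y1 • ((p : ℤ) • a) := by rw [add_zsmul, mul_zsmul, mul_zsmul]
        _ = x1 • (u • a) + y1 • (p • a) := by rw [natCast_zsmul a u, natCast_zsmul a p]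
        _ = x1 • (u • a) := by rw [hpa, smul_zero, add_zero]
    refine hk ⟨x1 • (p ^ (h - e) • y), ?_⟩
    rw [smul_comm, ← key, ← ha2]
  -- Zorn's lemma
  have hM1s : smulSub (p ^ (h + 1)) M ∈
      {L : AddSubgroup M | smulSub (p ^ (h + 1)) M ≤ L ∧ ∀ x ∈ L, x ∈ S → x = 0} :=
    ⟨le_refl _, hdisj⟩
  have hzorn : ∀ c ⊆ {L : AddSubgroup M | smulSub (p ^ (h + 1)) M ≤ L ∧ ∀ x ∈ L, x ∈ S → x = 0},
      IsChain (· ≤ ·) c → ∀ y ∈ c, ∃ ub ∈ {L : AddSubgroup M | smulSub (p ^ (h + 1)) M ≤ L ∧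
        ∀ x ∈ L, x ∈ S → x = 0}, ∀ z ∈ c, z ≤ ub := by
    intro c hcs hchain y hyc
    haveI : Nonempty c := ⟨⟨y, hyc⟩⟩
    have hdir : Directed (· ≤ ·) (fun K : c => (K : AddSubgroup M)) :=
      directedOn_iff_directed.mp hchain.directedOn
    refine ⟨⨆ K : c, (K : AddSubgroup M), ⟨?_, ?_⟩, ?_⟩
    · exact le_trans (hcs hyc).1 (le_iSup (fun K : c => (K : AddSubgroup M)) ⟨y, hyc⟩)
    · intro x hx hxS
      obtain ⟨K, hK⟩ := (AddSubgroup.mem_iSup_of_directed hdir).mp hx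
      exact (hcs K.2).2 x hK hxS
    · intro z hz
      exact le_iSup (fun K : c => (K : AddSubgroup M)) ⟨z, hz⟩
  obtain ⟨L, hLle, hLmax⟩ := zorn_le_nonempty₀ _ hzorn _ hM1s
  obtain ⟨hLsub, hLS⟩ := hLmax.1
  have hT : S ⊔ L = ⊤ := by
    by_contra hne
    have hx0' : ∃ x0, x0 ∉ S ⊔ L := by
      by_contra hcon
      push_neg at hcon
      exact hne (((AddSubgroup.eq_top_iff' _).mpr hcon))
    obtain ⟨x0, hx0⟩ := hx0'
    have hex : ∃ j, p ^ j • x0 ∈ S ⊔ L := by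
      obtain ⟨k, hk'⟩ := hM x0
      exact ⟨k, by rw [hk']; exact zero_mem _⟩
    have hj : p ^ Nat.find hex • x0 ∈ S ⊔ L := Nat.find_spec hex
    have hj0 : Nat.find hex ≠ 0 := by
      intro hz
      rw [hz, pow_zero, one_smul] at hj
      exact hx0 hj
    obtain ⟨j, hjj⟩ : ∃ j, Nat.find hex = j + 1 :=
      ⟨Nat.find hex - 1, (Nat.succ_pred_eq_of_pos (Nat.pos_of_ne_zero hj0)).symm⟩
    set c := p ^ j • x0 with hcdef
    have hc : c ∉ S ⊔ L := Nat.find_min hex (by omega)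
    have hpc : p • c ∈ S ⊔ L := by
      have h8 : p • c = p ^ (j + 1) • x0 := by rw [hcdef, ← mul_smul, ← pow_succ']
      rw [h8, ← hjj]
      exact hj
    obtain ⟨sb, hsbS, l, hlL, hsum⟩ := AddSubgroup.mem_sup.mp hpc
    obtain ⟨m, rfl⟩ := AddSubgroup.mem_zmultiples_iff.mp hsbS
    by_cases hdvd : (p : ℤ) ∣ m
    · obtain ⟨m', rfl⟩ := hdvd
      set d := c - m' • b with hddef
      have hdT : d ∉ S ⊔ L := by
        intro hd
        apply hc
        have h9 : c = d + m' • b := by rw [hddef]; abel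
        rw [h9]
        exact add_mem hd (AddSubgroup.mem_sup_left (AddSubgroup.mem_zmultiples_iff.mpr ⟨m', rfl⟩))
      have hpd : p • d ∈ L := by
        have h10 : p • d = l := by
          have h3 : p • (m' • b) = ((p : ℤ) * m') • b := by rw [mul_zsmul, natCast_zsmul]
          rw [hddef, smul_sub, h3, ← hsum]
          abel
        rw [h10]
        exact hlL
      have hdL : d ∉ L := fun hdl => hdT (AddSubgroup.mem_sup_right hdl)
      have hL'mem : ¬ (∀ x ∈ L ⊔ AddSubgroup.zmultiples d, x ∈ S → x = 0) := by
        intro hall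
        have hle := hLmax.2 ⟨le_trans hLsub le_sup_left, hall⟩ le_sup_left
        exact hdL (hle (AddSubgroup.mem_sup_right (AddSubgroup.mem_zmultiples d)))
      push_neg at hL'mem
      obtain ⟨z, hzL', hzS, hz0⟩ := hL'mem
      obtain ⟨l', hl'L, td, htd, hsum2⟩ := AddSubgroup.mem_sup.mp hzL'
      obtain ⟨t, rfl⟩ := AddSubgroup.mem_zmultiples_iff.mp htd
      by_cases hts : (p : ℤ) ∣ t
      · obtain ⟨t', rfl⟩ := hts
        have h11 : ((p : ℤ) * t') • d ∈ L := by
          rw [mul_comm, mul_zsmul, natCast_zsmul]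
          exact AddSubgroup.zsmul_mem _ hpd t'
        have hzL : z ∈ L := by
          rw [← hsum2]
          exact add_mem hl'L h11
        exact hz0 (hLS z hzL hzS)
      · obtain ⟨k, hk'⟩ := hM d
        have hpt' : ¬ p ∣ t.natAbs := fun hd =>
          hts (Int.dvd_natAbs.mp (Int.natCast_dvd_natCast.mpr hd))
        have hcop : IsCoprime (t : ℤ) ((p : ℤ) ^ k) := by
          refine IsCoprime.pow_right ?_
          rw [Int.isCoprime_iff_gcd_eq_one]
          simpa [Int.gcd] using Nat.coprime_comm.mp ((Nat.Prime.coprime_iff_not_dvd hp).mpr hpt')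
        obtain ⟨u1, v1, huv⟩ := hcop
        have htdT : t • d ∈ S ⊔ L := by
          have h12 : t • d = z - l' := by rw [← hsum2]; abel
          rw [h12]
          exact sub_mem (AddSubgroup.mem_sup_left hzS) (AddSubgroup.mem_sup_right hl'L)
        apply hdT
        have hd1 : d = u1 • (t • d) := by
          have h2 : (u1 * t + v1 * (p : ℤ) ^ k) • d = d := by rw [huv, one_zsmul]
          have h3 : ((p : ℤ) ^ k) • d = 0 := by
            rw [show ((p : ℤ) ^ k) = ((p ^ k : ℕ) : ℤ) by push_cast; ring, natCast_zsmul, hk']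
          calc d = (u1 * t + v1 * (p : ℤ) ^ k) • d := h2.symm
            _ = u1 • (t • d) + v1 • (((p : ℤ) ^ k) • d) := by rw [add_zsmul, mul_zsmul, mul_zsmul]
            _ = u1 • (t • d) := by rw [h3, smul_zero, add_zero]
        rw [hd1]
        exact AddSubgroup.zsmul_mem _ htdT u1
    · have hma_L : m • a ∈ L := by
        have h5 : p ^ h • (p • c) = p ^ h • (m • b) + p ^ h • l := by rw [← hsum, smul_add]
        have h6 : p ^ h • (m • b) = m • a := by rw [smul_comm, hb]
        have h7 : p ^ h • (p • c) = p ^ (h + 1) • c := by rw [← mul_smul, ← pow_succ]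
        rw [h7, h6] at h5
        have h4 : m • a = p ^ (h + 1) • c - p ^ h • l := by rw [h5]; abel
        rw [h4]
        exact sub_mem (hLsub ⟨c, rfl⟩) (AddSubgroup.nsmul_mem _ hlL _)
      have hma_S : m • a ∈ S := AddSubgroup.zsmul_mem _ haS m
      have hma0 : m • a = 0 := hLS _ hma_L hma_S
      have hpm' : ¬ p ∣ m.natAbs := fun hd =>
        hdvd (Int.dvd_natAbs.mp (Int.natCast_dvd_natCast.mpr hd))
      have hcop : IsCoprime (m : ℤ) ((p : ℤ)) := by
        rw [Int.isCoprime_iff_gcd_eq_one]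
        simpa [Int.gcd] using Nat.coprime_comm.mp ((Nat.Prime.coprime_iff_not_dvd hp).mpr hpm')
      obtain ⟨u1, v1, huv⟩ := hcop
      apply ha
      calc a = (u1 * m + v1 * (p : ℤ)) • a := by rw [huv, one_zsmul]
        _ = u1 • (m • a) + v1 • ((p : ℤ) • a) := by rw [add_zsmul, mul_zsmul, mul_zsmul]
        _ = 0 := by
            rw [hma0, smul_zero, natCast_zsmul, hpa, smul_zero, add_zero]
  exact ⟨S, L, hSfin, haS, ⟨AddSubgroup.disjoint_def.mpr (fun hx1 hx2 => hLS _ hx2 hx1),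
    codisjoint_iff.mpr hT⟩⟩

lemma key_induction (p : ℕ) (hp : p.Prime) : ∀ (n : ℕ) (M : Type) [AddCommGroup M],
    (∀ x : M, ∃ k : ℕ, p ^ k • x = 0) → pOmega p M = ⊥ →
    ∀ B : AddSubgroup M, Finite B → Nat.card B ≤ n →
    ∃ N L : AddSubgroup M, Finite N ∧ B ≤ N ∧ IsCompl N L := by
  intro n
  induction n with
  | zero =>
    intro M _ _ _ B hB hcard
    have : Nonempty ↥B := ⟨⟨0, zero_mem B⟩⟩
    have := Nat.card_pos (α := ↥B)
    omega
  | succ n ih =>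
    intro M _ hM h0 B hB hcard
    classical
    by_cases hBbot : B = ⊥
    · exact ⟨⊥, ⊤, inferInstance, by rw [hBbot], isCompl_bot_top⟩
    · -- find a ∈ B of order p, a ≠ 0
      obtain ⟨a0, ha0B, ha0⟩ : ∃ x ∈ B, x ≠ 0 := by
        by_contra hcon
        push_neg at hcon
        exact hBbot (by
          ext x
          simp only [AddSubgroup.mem_bot]
          exact ⟨fun hx => hcon x hx, fun hx => by rw [hx]; exact zero_mem B⟩)
      have hex : ∃ k, p ^ k • a0 = 0 := hM a0
      have hk : p ^ Nat.find hex • a0 = 0 := Nat.find_spec hex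
      have hk0 : Nat.find hex ≠ 0 := by
        intro hz
        rw [hz, pow_zero, one_smul] at hk
        exact ha0 hk
      obtain ⟨k1, hk1⟩ : ∃ k1, Nat.find hex = k1 + 1 :=
        ⟨Nat.find hex - 1, (Nat.succ_pred_eq_of_pos (Nat.pos_of_ne_zero hk0)).symm⟩
      set a := p ^ k1 • a0 with hadef
      have haB : a ∈ B := AddSubgroup.nsmul_mem B ha0B _
      have ha : a ≠ 0 := fun hz => (Nat.find_min hex (by omega : k1 < Nat.find hex)) hz
      have hpa : p • a = 0 := by
        have h7 : p • a = p ^ (k1 + 1) • a0 := by rw [hadef, ← mul_smul, ← pow_succ']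
        rw [h7, ← hk1]
        exact hk
      obtain ⟨S, L1, hSfin, haS, hcompl⟩ := summand_of_order_p p hp M hM h0 a ha hpa
      -- switch to ℤ-submodules and project onto L1
      set S' : Submodule ℤ M := AddSubgroup.toIntSubmodule S with hS'def
      set L1' : Submodule ℤ M := AddSubgroup.toIntSubmodule L1 with hL1'def
      have hcLS : IsCompl L1' S' := by
        constructor
        · rw [Submodule.disjoint_def]
          intro x hx1 hx2
          exact AddSubgroup.disjoint_def.mp hcompl.disjoint hx2 hx1
        · rw [codisjoint_iff, Submodule.eq_top_iff']
          intro x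
          have : x ∈ S ⊔ L1 := by rw [codisjoint_iff.mp hcompl.codisjoint]; trivial
          obtain ⟨y, hy, z, hz, hyz⟩ := AddSubgroup.mem_sup.mp this
          exact Submodule.mem_sup.mpr ⟨z, hz, y, hy, by rw [← hyz]; abel⟩
      set π : M →ₗ[ℤ] ↥L1' := L1'.linearProjOfIsCompl S' hcLS with hπdef
      have hπL1 : ∀ x : ↥L1', π (x : M) = x := fun x => Submodule.linearProjOfIsCompl_apply_left hcLS x
      have hπS : ∀ x : M, x ∈ S → π x = 0 := fun x hx =>
        Submodule.linearProjOfIsCompl_apply_right hcLS ⟨x, hx⟩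
      have hdecomp : ∀ x : M, x - (π x : M) ∈ S := by
        intro x
        have hxtop : x ∈ L1' ⊔ S' := by rw [codisjoint_iff.mp hcLS.codisjoint]; trivial
        obtain ⟨u, hu, v, hv, huv⟩ := Submodule.mem_sup.mp hxtop
        have : π x = ⟨u, hu⟩ := by
          rw [← huv, map_add, hπL1 ⟨u, hu⟩, hπS v hv, add_zero]
        rw [this]
        have : x - u = v := by rw [← huv]; abel
        rw [this]
        exact hv
      -- the image of B in L1
      set ψ : ↥B →+ ↥L1' := π.toAddMonoidHom.comp B.subtype with hψdef
      set B' : AddSubgroup ↥L1' := ψ.range with hB'def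
      have hB'fin : Finite ↥B' := by
        refine Set.finite_coe_iff.mpr ?_
        rw [hB'def, AddMonoidHom.coe_range]
        exact Set.finite_range ψ
      -- cardinality drops
      have hcard' : Nat.card ↥B' ≤ n := by
        have h1 : Nat.card ↥B = Nat.card (↥B ⧸ ψ.ker) * Nat.card ↥ψ.ker :=
          AddSubgroup.card_eq_card_quotient_mul_card_addSubgroup ψ.ker
        have h2 : Nat.card (↥B ⧸ ψ.ker) = Nat.card ↥B' :=
          Nat.card_congr (QuotientAddGroup.quotientKerEquivRange ψ).toEquiv
        have h3 : Nontrivial ↥ψ.ker := by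
          refine ⟨⟨⟨⟨a, haB⟩, ?_⟩, 0, ?_⟩⟩
          · rw [AddMonoidHom.mem_ker, hψdef]
            exact hπS a haS
          · intro hcon
            rw [Subtype.ext_iff, Subtype.ext_iff] at hcon
            exact ha hcon
        have h4 : 2 ≤ Nat.card ↥ψ.ker := Finite.one_lt_card_iff_nontrivial.mpr h3
        have h5 : Nonempty ↥B' := ⟨0⟩
        have h6 := Nat.card_pos (α := ↥B')
        rw [h2] at h1
        have h7 : Nat.card ↥B' * 2 ≤ Nat.card ↥B' * Nat.card ↥ψ.ker :=
          Nat.mul_le_mul_left _ h4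
        omega
      -- hypotheses for L1'
      have hM' : ∀ x : ↥L1', ∃ k : ℕ, p ^ k • x = 0 := by
        intro x
        obtain ⟨k, hk'⟩ := hM (x : M)
        exact ⟨k, Subtype.ext (by simpa using hk')⟩
      have h0' : pOmega p ↥L1' = ⊥ := by
        rw [eq_bot_iff]
        intro x hx
        have hx' : ∀ k : ℕ, x ∈ smulSub (p ^ k) ↥L1' := AddSubgroup.mem_iInf.mp hx
        have : (x : M) ∈ pOmega p M := by
          rw [pOmega]
          refine AddSubgroup.mem_iInf.mpr fun k => ?_
          obtain ⟨y, hy⟩ := hx' k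
          exact ⟨(y : M), by rw [← hy]; simp⟩
        rw [h0] at this
        simp only [AddSubgroup.mem_bot] at this ⊢
        exact Subtype.ext this
      obtain ⟨N₂, L₂, hN₂fin, hB'N₂, hcompl₂⟩ := ih ↥L1' hM' h0' B' hB'fin hcard'
      -- assemble
      set e : ↥L1' →+ M := L1'.subtype.toAddMonoidHom with hedef
      have heinj : Function.Injective e := Subtype.val_injective
      have heL1 : ∀ v : ↥L1', e v ∈ L1 := fun v => v.2
      set N : AddSubgroup M := S ⊔ N₂.map e with hNdef
      set L : AddSubgroup M := L₂.map e with hLdef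
      refine ⟨N, L, ?_, ?_, ?_, ?_⟩
      · -- Finite N
        refine finite_sup _ _ hSfin ?_
        refine Set.finite_coe_iff.mpr ?_
        rw [AddSubgroup.coe_map]
        exact Set.Finite.image _ (Set.finite_coe_iff.mp hN₂fin)
      · -- B ≤ N
        intro x hx
        have h1 : (π x : M) ∈ N₂.map e :=
          AddSubgroup.mem_map.mpr ⟨π x, hB'N₂ (AddMonoidHom.mem_range.mpr ⟨⟨x, hx⟩, rfl⟩), rfl⟩
        have h2 : x = (x - (π x : M)) + (π x : M) := by abel
        rw [h2]
        exact add_mem (AddSubgroup.mem_sup_left (hdecomp x)) (AddSubgroup.mem_sup_right h1)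
      · -- Disjoint N L
        rw [AddSubgroup.disjoint_def]
        intro x hxN hxL
        obtain ⟨s, hs, nn, hnn, hsnn⟩ := AddSubgroup.mem_sup.mp hxN
        obtain ⟨n₂, hn₂, hn₂e⟩ := AddSubgroup.mem_map.mp hnn
        obtain ⟨l₂, hl₂, hl₂e⟩ := AddSubgroup.mem_map.mp hxL
        have hsL1 : s ∈ L1 := by
          have : s = e l₂ - e n₂ := by rw [hl₂e, hn₂e, ← hsnn]; abel
          rw [this, ← map_sub]
          exact heL1 _
        have hs0 : s = 0 := AddSubgroup.disjoint_def.mp hcompl.disjoint hs hsL1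
        have hxn : x = e n₂ := by rw [← hsnn, hs0, zero_add, hn₂e]
        have heq : n₂ = l₂ := heinj (by rw [← hxn, hl₂e])
        have : n₂ = 0 := AddSubgroup.disjoint_def.mp hcompl₂.disjoint hn₂ (heq ▸ hl₂)
        rw [hxn, this, map_zero]
      · -- Codisjoint N L
        rw [codisjoint_iff, AddSubgroup.eq_top_iff']
        intro x
        have hxtop : x ∈ S ⊔ L1 := by rw [codisjoint_iff.mp hcompl.codisjoint]; trivial
        obtain ⟨s, hs, l, hl, hsl⟩ := AddSubgroup.mem_sup.mp hxtop
        set l' : ↥L1' := ⟨l, hl⟩ with hl'def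
        have hl'top : l' ∈ N₂ ⊔ L₂ := by rw [codisjoint_iff.mp hcompl₂.codisjoint]; trivial
        obtain ⟨n₂, hn₂, l₂, hl₂, hnl⟩ := AddSubgroup.mem_sup.mp hl'top
        refine AddSubgroup.mem_sup.mpr ⟨s + e n₂, ?_, e l₂, ?_, ?_⟩
        · exact add_mem (AddSubgroup.mem_sup_left hs) (AddSubgroup.mem_sup_right
            (AddSubgroup.mem_map.mpr ⟨n₂, hn₂, rfl⟩))
        · exact AddSubgroup.mem_map.mpr ⟨l₂, hl₂, rfl⟩
        · have : e n₂ + e l₂ = l := by rw [← map_add, hnl]; rfl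
          rw [add_assoc, this, hsl]
          

end Statement15Aux

/-- in a reduced `p`-group with `⋂_k p^k M = 0`, every finite subset is
contained in a finite direct summand. -/
theorem statement15 (p : ℕ) (hp : p.Prime) (M : Type) [AddCommGroup M]
    (hM : ∀ x : M, ∃ k : ℕ, p ^ k • x = 0)
    (hred : ∀ D : AddSubgroup M, DivisibleSub D → D = ⊥)
    (h0 : pOmega p M = ⊥)
    (C : Set M) (hC : C.Finite) :
    ∃ (N L : AddSubgroup M), Finite N ∧ C ⊆ (N : Set M) ∧ IsCompl N L := by
  have hM' : ∀ x : M, ∃ n : ℕ, 0 < n ∧ n • x = 0 := fun x => by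
    obtain ⟨k, hk⟩ := hM x
    exact ⟨p ^ k, pow_pos hp.pos k, hk⟩
  have hBfin : Finite ↥(AddSubgroup.closure C) := closure_fin hM' hC
  obtain ⟨N, L, hNfin, hBN, hcompl⟩ :=
    key_induction p hp (Nat.card ↥(AddSubgroup.closure C)) M hM h0
      (AddSubgroup.closure C) hBfin le_rfl
  exact ⟨N, L, hNfin, fun x hx => hBN (AddSubgroup.subset_closure hx), hcompl⟩
end
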